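/- arXiv:1205.3105 — 10 statements merged into one kernel-verified Lean document; each statement's English description precedes it below -/
import Mathlib

section
/- If H is an induced subdigraph of a digraph G on m vertices, then for all 1 ≤ k ≤ m, the k-th critical ideal of H (viewed inside the polynomial ring of G by the natural inclusion of variables) is contained in the k-th critical ideal of G: I_k(H,X) ⊆ I_k(G,X). -/
open MvPolynomial Matrix

noncomputable def glap {P : Type} [CommRing P] {V : Type} [Fintype V] [DecidableEq V]
    (m : V → V → ℕ) : Matrix V V (MvPolynomial V P) :=
  Matrix.of fun u v => if u = v then X u else - (m u v : MvPolynomial V P)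

noncomputable def critIdeal {P : Type} [CommRing P] {V : Type} [Fintype V] [DecidableEq V]
    (m : V → V → ℕ) (i : ℕ) : Ideal (MvPolynomial V P) :=
  Ideal.span { p | ∃ r s : Fin i → V, Function.Injective r ∧ Function.Injective s ∧
    p = ((glap (P := P) m).submatrix r s).det }

section Induced

variable {P : Type} [CommRing P] {V W : Type} [Fintype V] [DecidableEq V] [Fintype W]
  [DecidableEq W] (m : V → V → ℕ) {f : W → V}

theorem glap_induced_map_rename (hf : Function.Injective f) :
    (glap (P := P) fun u v => m (f u) (f v)).map (rename f) = (glap m).submatrix f f := by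
  ext u v
  by_cases huv : u = v
  · simp [glap, huv]
  · simp [glap, huv, hf.ne huv]

theorem rename_det_induced_minor (hf : Function.Injective f) {k : ℕ} (r s : Fin k → W) :
    rename f ((glap (P := P) fun u v => m (f u) (f v)).submatrix r s).det =
      ((glap m).submatrix (f ∘ r) (f ∘ s)).det := by
  rw [AlgHom.map_det, AlgHom.mapMatrix_apply, ← submatrix_map,
    glap_induced_map_rename m hf, submatrix_submatrix]

theorem critIdeal_induced_map_rename_le (hf : Function.Injective f) (k : ℕ) :
    (critIdeal (P := P) (fun u v => m (f u) (f v)) k).map (rename f : _ →ₐ[P] _) ≤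
      critIdeal m k := by
  rw [critIdeal, Ideal.map_span]
  refine Ideal.span_mono ?_
  rintro _ ⟨_, ⟨r, s, hr, hs, rfl⟩, rfl⟩
  exact ⟨f ∘ r, f ∘ s, hf.comp hr, hf.comp hs, rename_det_induced_minor m hf r s⟩

end Induced

theorem critIdeal_induced_le_general {P : Type} [CommRing P] {nG nH : ℕ}
    (mG : Fin nG → Fin nG → ℕ) (ι : Fin nH → Fin nG) (hι : Function.Injective ι)
    (k : ℕ) :
    (critIdeal (P := P) (fun u v => mG (ι u) (ι v)) k).map
        (MvPolynomial.rename ι : MvPolynomial (Fin nH) P →ₐ[P] MvPolynomial (Fin nG) P).toRingHom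
      ≤ critIdeal (P := P) mG k :=
  critIdeal_induced_map_rename_le mG hι k

/-- If `H` is an induced subdigraph of `G` (via the injection `ι` of vertex sets, with
arc multiplicities inherited from `G`), then for all `1 ≤ k ≤ |V(H)|` the `k`-th critical
ideal of `H`, viewed inside the polynomial ring of `G` via renaming of variables,
is contained in the `k`-th critical ideal of `G`. -/
theorem critIdeal_induced_le {P : Type} [CommRing P] {nG nH : ℕ}
    (mG : Fin nG → Fin nG → ℕ) (ι : Fin nH → Fin nG) (hι : Function.Injective ι)
    (k : ℕ) (h1 : 1 ≤ k) (hk : k ≤ nH) :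
    (critIdeal (P := P) (fun u v => mG (ι u) (ι v)) k).map
        (MvPolynomial.rename ι : MvPolynomial (Fin nH) P →ₐ[P] MvPolynomial (Fin nG) P).toRingHom
      ≤ critIdeal (P := P) mG k :=
  critIdeal_induced_le_general mG ι hι k
end

section
/- For vertex-disjoint digraphs G and H, the i-th critical ideal of the disjoint union G ⊔ H equals the ideal generated by the union over j = 0,…,i of the products I_j(G,X)·I_{i-j}(H,X), for all 1 ≤ i ≤ |V(G)| + |V(H)|. -/
/-!
An `i × i` minor of `fromBlocks A 0 0 D` with rows `r` and columns `s` vanishes unless `r` and `s`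
pick the same number `j` of indices from the first block: otherwise some set of rows is supported
on fewer columns. When the counts agree, reordering rows and columns (which changes the
determinant only by a sign) turns the minor into a block-diagonal one, so it equals
`± det A' * det D'` for a `j × j` minor `A'` of `A` and an `(i - j) × (i - j)` minor `D'` of `D`.
Conversely every such product is an `i × i` minor of the block matrix. The Laplacian of `G ⊔ H`
is `fromBlocks L(G) 0 0 L(H)`, and renaming variables commutes with taking minors.
-/

open MvPolynomial Matrix

/-- The arc-multiplicity function of the disjoint union of two digraphs. -/
def disjUnion {a b : ℕ} (mG : Fin a → Fin a → ℕ) (mH : Fin b → Fin b → ℕ) :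
    Fin a ⊕ Fin b → Fin a ⊕ Fin b → ℕ
  | Sum.inl x, Sum.inl y => mG x y
  | Sum.inr x, Sum.inr y => mH x y
  | _, _ => 0

theorem Function.Injective.exists_sumMap_eq_comp_sumCompl {ι α β : Type*} {r : ι → α ⊕ β}
    (hr : r.Injective) :
    ∃ (r₁ : {x // (r x).isLeft} → α) (r₂ : {x // ¬(r x).isLeft} → β),
      r₁.Injective ∧ r₂.Injective ∧ r ∘ Equiv.sumCompl _ = Sum.map r₁ r₂ := by
  refine ⟨fun x => (r x).getLeft x.2, fun x => (r x).getRight (Sum.not_isLeft.1 x.2),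
    fun x y h => Subtype.ext (hr ?_), fun x y h => Subtype.ext (hr ?_), ?_⟩
  · rw [← Sum.inl_getLeft (r x) x.2, ← Sum.inl_getLeft (r y) y.2]
    exact congrArg Sum.inl h
  · rw [← Sum.inr_getRight (r x) (Sum.not_isLeft.1 x.2),
      ← Sum.inr_getRight (r y) (Sum.not_isLeft.1 y.2)]
    exact congrArg Sum.inr h
  · funext x
    rcases x with x | x
    · exact (Sum.inl_getLeft _ _).symm
    · exact (Sum.inr_getRight _ _).symm

namespace Matrix

theorem fromBlocks_submatrix_sumMap {m₁ m₂ n₁ n₂ l₁ l₂ k₁ k₂ α : Type*}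
    (A : Matrix m₁ n₁ α) (B : Matrix m₁ n₂ α) (C : Matrix m₂ n₁ α) (D : Matrix m₂ n₂ α)
    (r₁ : l₁ → m₁) (r₂ : l₂ → m₂) (s₁ : k₁ → n₁) (s₂ : k₂ → n₂) :
    (fromBlocks A B C D).submatrix (Sum.map r₁ r₂) (Sum.map s₁ s₂) =
      fromBlocks (A.submatrix r₁ s₁) (B.submatrix r₁ s₂) (C.submatrix r₂ s₁)
        (D.submatrix r₂ s₂) := by
  ext (x | x) (y | y) <;> rfl

variable {R : Type*} [CommRing R]

theorem associated_det_submatrix_equiv {ι κ : Type*} [Fintype ι] [DecidableEq ι] [Fintype κ]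
    [DecidableEq κ] (N : Matrix ι ι R) (e f : κ ≃ ι) :
    Associated (N.submatrix e f).det N.det := by
  have hσ : N.submatrix e f = (N.submatrix (f.symm.trans e : Equiv.Perm ι) id).submatrix f f := by
    ext x y
    simp
  rw [hσ, det_submatrix_equiv_self, det_permute]
  exact associated_unit_mul_left _ _ ((Units.isUnit _).map (Int.castRingHom R))

theorem det_eq_zero_of_card_lt {ι : Type*} [Fintype ι] [DecidableEq ι] (N : Matrix ι ι R)
    (p q : ι → Prop) [DecidablePred p] [DecidablePred q]
    (hN : ∀ x y, p x → ¬ q y → N x y = 0)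
    (hcard : Fintype.card {y // q y} < Fintype.card {x // p x}) : N.det = 0 := by
  rw [det_apply]
  refine Finset.sum_eq_zero fun σ _ => ?_
  obtain ⟨y, hpy, hqy⟩ : ∃ y, p (σ y) ∧ ¬ q y := by
    by_contra! h
    exact hcard.not_ge (Fintype.card_le_of_injective (fun x => ⟨σ.symm x, h _ (by simpa using x.2)⟩)
      fun x x' hxx' => Subtype.ext (σ.symm.injective (congrArg Subtype.val hxx')))
  rw [Finset.prod_eq_zero (f := fun x => N (σ x) x) (Finset.mem_univ y) (hN _ _ hpy hqy),
    smul_zero]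

def minorIdeal {m n : Type*} (M : Matrix m n R) (i : ℕ) : Ideal R :=
  Ideal.span {p | ∃ r s : Fin i → _, Function.Injective r ∧ Function.Injective s ∧
    p = (M.submatrix r s).det}

theorem det_submatrix_mem_minorIdeal {m n κ : Type*} [Fintype κ] [DecidableEq κ]
    (M : Matrix m n R) {r : κ → m} {s : κ → n} (hr : r.Injective) (hs : s.Injective) :
    (M.submatrix r s).det ∈ minorIdeal M (Fintype.card κ) := by
  set e := Fintype.equivFin κ
  have hsub : M.submatrix r s = (M.submatrix (r ∘ e.symm) (s ∘ e.symm)).submatrix e e := by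
    simp [submatrix_submatrix, Function.comp_assoc]
  rw [hsub, det_submatrix_equiv_self]
  exact Ideal.subset_span ⟨_, _, hr.comp e.symm.injective, hs.comp e.symm.injective, rfl⟩

theorem minorIdeal_map {m n S : Type*} [CommRing S] (f : R →+* S) (M : Matrix m n R) (i : ℕ) :
    minorIdeal (M.map f) i = (minorIdeal M i).map f := by
  rw [minorIdeal, minorIdeal, Ideal.map_span]
  congr 1
  ext p
  constructor
  · rintro ⟨r, s, hr, hs, rfl⟩
    exact ⟨_, ⟨r, s, hr, hs, rfl⟩, RingHom.map_det f _⟩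
  · rintro ⟨_, ⟨r, s, hr, hs, rfl⟩, rfl⟩
    exact ⟨r, s, hr, hs, RingHom.map_det f _⟩

variable {m₁ m₂ n₁ n₂ : Type*}

theorem mul_minorIdeal_le_minorIdeal_fromBlocks (A : Matrix m₁ n₁ R) (D : Matrix m₂ n₂ R)
    (j k : ℕ) : minorIdeal A j * minorIdeal D k ≤ minorIdeal (fromBlocks A 0 0 D) (j + k) := by
  rw [minorIdeal, minorIdeal, Ideal.span_mul_span', Ideal.span_le]
  rintro _ ⟨_, ⟨r₁, s₁, hr₁, hs₁, rfl⟩, _, ⟨r₂, s₂, hr₂, hs₂, rfl⟩, rfl⟩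
  have hmem := det_submatrix_mem_minorIdeal (fromBlocks A 0 0 D)
    (hr₁.sumMap hr₂) (hs₁.sumMap hs₂)
  simpa [fromBlocks_submatrix_sumMap, det_fromBlocks_zero₁₂] using hmem

theorem det_submatrix_fromBlocks_mem (A : Matrix m₁ n₁ R) (D : Matrix m₂ n₂ R) {i : ℕ}
    {r : Fin i → m₁ ⊕ m₂} {s : Fin i → n₁ ⊕ n₂} (hr : r.Injective) (hs : s.Injective) :
    ((fromBlocks A 0 0 D).submatrix r s).det ∈
      ⨆ j ∈ Finset.range (i + 1), minorIdeal A j * minorIdeal D (i - j) := by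
  set N := (fromBlocks A 0 0 D).submatrix r s
  set p : Fin i → Prop := fun x => (r x).isLeft
  set q : Fin i → Prop := fun y => (s y).isLeft
  have hN : ∀ x y, (p x ↔ ¬ q y) → N x y = 0 := by
    intro x y hxy
    simp only [p, q] at hxy
    rcases hrx : r x with u | u <;> rcases hsy : s y with v | v <;> simp_all [N]
  have hcard_compl : ∀ t : Fin i → Prop, [DecidablePred t] →
      Fintype.card {x // ¬ t x} = i - Fintype.card {x // t x} := fun t _ => by
    rw [Fintype.card_subtype_compl, Fintype.card_fin]
  rcases lt_trichotomy (Fintype.card {x // p x}) (Fintype.card {y // q y}) with hlt | heq | hgt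
  · have hqi : Fintype.card {y // q y} ≤ i := by simpa using Fintype.card_subtype_le q
    rw [det_eq_zero_of_card_lt N (¬ p ·) (¬ q ·) (fun x y hx hy => hN x y (by tauto))
      (by rw [hcard_compl, hcard_compl]; omega)]
    exact zero_mem _
  · obtain ⟨r₁, r₂, hr₁, hr₂, hr'⟩ := hr.exists_sumMap_eq_comp_sumCompl
    obtain ⟨s₁, s₂, hs₁, hs₂, hs'⟩ := hs.exists_sumMap_eq_comp_sumCompl
    let g₁ : {x // p x} ≃ {y // q y} := Fintype.equivOfCardEq heq
    let g₂ : {x // ¬ p x} ≃ {y // ¬ q y} :=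
      Fintype.equivOfCardEq (by rw [hcard_compl, hcard_compl, heq])
    have hblocks : N.submatrix (Equiv.sumCompl p) ((g₁.sumCongr g₂).trans (Equiv.sumCompl q)) =
        fromBlocks (A.submatrix r₁ (s₁ ∘ g₁)) 0 0 (D.submatrix r₂ (s₂ ∘ g₂)) := by
      rw [submatrix_submatrix, Equiv.coe_trans, ← Function.comp_assoc, hr', hs',
        show ⇑(g₁.sumCongr g₂) = Sum.map g₁ g₂ from rfl, Sum.map_comp_map,
        fromBlocks_submatrix_sumMap]
      rfl
    rw [← Ideal.mem_iff_of_associated (associated_det_submatrix_equiv N (Equiv.sumCompl p)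
      ((g₁.sumCongr g₂).trans (Equiv.sumCompl q))), hblocks, det_fromBlocks_zero₁₂]
    refine Ideal.mem_iSup_of_mem _ (Ideal.mem_iSup_of_mem
      (by simpa [Nat.lt_succ_iff] using Fintype.card_subtype_le p) (Ideal.mul_mem_mul ?_ ?_))
    · exact det_submatrix_mem_minorIdeal A hr₁ (hs₁.comp g₁.injective)
    · rw [← hcard_compl]
      exact det_submatrix_mem_minorIdeal D hr₂ (hs₂.comp g₂.injective)
  · rw [det_eq_zero_of_card_lt N p q (fun x y hx hy => hN x y (by tauto)) hgt]
    exact zero_mem _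

theorem minorIdeal_fromBlocks_zero (A : Matrix m₁ n₁ R) (D : Matrix m₂ n₂ R) (i : ℕ) :
    minorIdeal (fromBlocks A 0 0 D) i =
      ⨆ j ∈ Finset.range (i + 1), minorIdeal A j * minorIdeal D (i - j) := by
  refine le_antisymm (Ideal.span_le.2 ?_) (iSup₂_le fun j hj => ?_)
  · rintro _ ⟨r, s, hr, hs, rfl⟩
    exact det_submatrix_fromBlocks_mem A D hr hs
  · have hji : j + (i - j) = i := Nat.add_sub_cancel' (Finset.mem_range_succ_iff.1 hj)
    have hle := mul_minorIdeal_le_minorIdeal_fromBlocks A D j (i - j)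
    rwa [hji] at hle

end Matrix

theorem critIdeal_eq_minorIdeal_glap {P : Type} [CommRing P] {V : Type} [Fintype V]
    [DecidableEq V] (m : V → V → ℕ) (i : ℕ) :
    critIdeal (P := P) m i = (glap m).minorIdeal i :=
  rfl

theorem glap_disjUnion {P : Type} [CommRing P] {a b : ℕ} (mG : Fin a → Fin a → ℕ)
    (mH : Fin b → Fin b → ℕ) :
    glap (P := P) (disjUnion mG mH) =
      fromBlocks ((glap mG).map (rename Sum.inl)) 0 0 ((glap mH).map (rename Sum.inr)) := by
  ext (x | x) (y | y) <;> simp [glap, disjUnion, apply_ite (rename (R := P) _)]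

theorem critIdeal_disjUnion_general {P : Type} [CommRing P] {a b : ℕ}
    (mG : Fin a → Fin a → ℕ) (mH : Fin b → Fin b → ℕ) (i : ℕ) :
    critIdeal (P := P) (disjUnion mG mH) i
      = ⨆ j ∈ Finset.range (i + 1),
          (Ideal.map (MvPolynomial.rename (Sum.inl : Fin a → Fin a ⊕ Fin b) :
              MvPolynomial (Fin a) P →ₐ[P] MvPolynomial (Fin a ⊕ Fin b) P).toRingHom
            (critIdeal (P := P) mG j)) *
          (Ideal.map (MvPolynomial.rename (Sum.inr : Fin b → Fin a ⊕ Fin b) :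
              MvPolynomial (Fin b) P →ₐ[P] MvPolynomial (Fin a ⊕ Fin b) P).toRingHom
            (critIdeal (P := P) mH (i - j))) := by
  simp only [critIdeal_eq_minorIdeal_glap, glap_disjUnion, Matrix.minorIdeal_fromBlocks_zero,
    ← Matrix.minorIdeal_map]
  rfl

/-- For vertex-disjoint digraphs `G` and `H`, the `i`-th critical ideal of `G ⊔ H` is the
ideal generated by the union over `j = 0, …, i` of the products `I_j(G) · I_{i-j}(H)`
(viewing the two critical ideals inside the big polynomial ring via renaming). -/
theorem critIdeal_disjUnion {P : Type} [CommRing P] {a b : ℕ}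
    (mG : Fin a → Fin a → ℕ) (mH : Fin b → Fin b → ℕ) (i : ℕ)
    (h1 : 1 ≤ i) (hi : i ≤ a + b) :
    critIdeal (P := P) (disjUnion mG mH) i
      = ⨆ j ∈ Finset.range (i + 1),
          (Ideal.map (MvPolynomial.rename (Sum.inl : Fin a → Fin a ⊕ Fin b) :
              MvPolynomial (Fin a) P →ₐ[P] MvPolynomial (Fin a ⊕ Fin b) P).toRingHom
            (critIdeal (P := P) mG j)) *
          (Ideal.map (MvPolynomial.rename (Sum.inr : Fin b → Fin a ⊕ Fin b) :
              MvPolynomial (Fin b) P →ₐ[P] MvPolynomial (Fin a ⊕ Fin b) P).toRingHom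
            (critIdeal (P := P) mH (i - j))) :=
  critIdeal_disjUnion_general mG mH i
end

section
/- If Q = M ⊕ N is a block diagonal matrix with M of size m and N of size n, and r, s ⊆ [m+n] are index sets with |r| = |s| = k, then det(Q[r;s]) = det(Q[r∩[m]; s∩[m]]) · det(Q[r∖[m]; s∖[m]]) when |r∩[m]| = |s∩[m]|, and det(Q[r;s]) = 0 otherwise. -/
/-!
The increasing enumeration of `r` is the enumeration of `r ∩ [m]` followed by the (shifted)
enumeration of `r ∖ [m]`. If `|r ∩ [m]| = |s ∩ [m]|`, reindexing rows and columns of `Q[r;s]` by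
the same splitting of `Fin k` therefore turns it into the block diagonal matrix
`M[r₁;s₁] ⊕ N[r₂;s₂]`. Otherwise every term of the Leibniz expansion vanishes: a permutation
all of whose entries are nonzero would map the first `|s₁|` columns bijectively onto the first
`|r₁|` rows.
-/

open Matrix Finset

theorem Fin.strictMono_append {α : Type*} [Preorder α] {a b : ℕ} {u : Fin a → α} {v : Fin b → α}
    (hu : StrictMono u) (hv : StrictMono v) (huv : ∀ i j, u i < v j) :
    StrictMono (Fin.append u v) := by
  intro x y hxy
  induction x using Fin.addCases with
  | left i =>
    induction y using Fin.addCases with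
    | left j => simpa using hu ((Fin.strictMono_castAdd b).lt_iff_lt.mp hxy)
    | right j => simpa using huv i j
  | right i =>
    induction y using Fin.addCases with
    | left j => simp [Fin.lt_def] at hxy; omega
    | right j => simpa using hv ((Fin.natAdd_lt_natAdd_iff a).mp hxy)

theorem Matrix.det_eq_zero_of_card_filter_ne {ι R : Type*} [Fintype ι] [DecidableEq ι]
    [CommRing R] (A : Matrix ι ι R) (p q : ι → Prop) [DecidablePred p] [DecidablePred q]
    (hA : ∀ i j, ¬(p i ↔ q j) → A i j = 0) (hpq : #{i | p i} ≠ #{j | q j}) : A.det = 0 := by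
  rw [det_apply]
  refine sum_eq_zero fun σ _ => ?_
  suffices ∃ j, A (σ j) j = 0 by
    obtain ⟨j, hj⟩ := this
    rw [prod_eq_zero (f := fun j => A (σ j) j) (mem_univ j) hj, smul_zero]
  by_contra! hσ
  have hσpq : ∀ j, q j ↔ p (σ j) := fun j => (not_not.mp (mt (hA (σ j) j) (hσ j))).symm
  refine hpq ?_
  rw [← Fintype.card_subtype, ← Fintype.card_subtype]
  exact (Fintype.card_congr (σ.subtypeEquiv hσpq)).symm

section

variable {m n : ℕ}

theorem Finset.card_filter_castAdd_add_card_filter_natAdd (r : Finset (Fin (m + n))) :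
    #{i | Fin.castAdd n i ∈ r} + #{j | Fin.natAdd m j ∈ r} = #r := by
  conv_rhs => rw [← card_map finSumFinEquiv.symm.toEmbedding, ← card_toLeft_add_card_toRight]
  congr 2 <;> ext <;> simp [mem_map_equiv]

theorem Finset.orderEmbOfFin_eq_append (r : Finset (Fin (m + n)))
    (h : #r = #{i | Fin.castAdd n i ∈ r} + #{j | Fin.natAdd m j ∈ r}) :
    ⇑(r.orderEmbOfFin h) = Fin.append
      (Fin.castAdd n ∘ ({i | Fin.castAdd n i ∈ r} : Finset (Fin m)).orderEmbOfFin rfl)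
      (Fin.natAdd m ∘ ({j | Fin.natAdd m j ∈ r} : Finset (Fin n)).orderEmbOfFin rfl) := by
  refine (orderEmbOfFin_unique h (fun x => ?_) ?_).symm
  · induction x using Fin.addCases with
    | left i => simpa using (mem_filter.mp (orderEmbOfFin_mem _ rfl i)).2
    | right j => simpa using (mem_filter.mp (orderEmbOfFin_mem _ rfl j)).2
  · refine Fin.strictMono_append ?_ ?_ fun i j => ?_
    · exact (Fin.strictMono_castAdd n).comp (orderEmbOfFin _ rfl).strictMono
    · exact (Fin.strictMono_natAdd m).comp (orderEmbOfFin _ rfl).strictMono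
    · simp [Fin.lt_def]; omega

theorem Finset.orderEmbOfFin_cast_castAdd (r : Finset (Fin (m + n))) {a b k : ℕ} (h : #r = k)
    (ha : #{i | Fin.castAdd n i ∈ r} = a) (hb : #{j | Fin.natAdd m j ∈ r} = b) (hk : a + b = k)
    (i : Fin a) :
    r.orderEmbOfFin h (Fin.cast hk (Fin.castAdd b i)) =
      Fin.castAdd n (({i | Fin.castAdd n i ∈ r} : Finset (Fin m)).orderEmbOfFin ha i) := by
  subst hk ha hb
  simp [orderEmbOfFin_eq_append r h]

theorem Finset.orderEmbOfFin_cast_natAdd (r : Finset (Fin (m + n))) {a b k : ℕ} (h : #r = k)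
    (ha : #{i | Fin.castAdd n i ∈ r} = a) (hb : #{j | Fin.natAdd m j ∈ r} = b) (hk : a + b = k)
    (j : Fin b) :
    r.orderEmbOfFin h (Fin.cast hk (Fin.natAdd a j)) =
      Fin.natAdd m (({j | Fin.natAdd m j ∈ r} : Finset (Fin n)).orderEmbOfFin hb j) := by
  subst hk ha hb
  simp [orderEmbOfFin_eq_append r h]

theorem Finset.val_orderEmbOfFin_lt_iff (r : Finset (Fin (m + n))) {k : ℕ} (h : #r = k)
    (i : Fin k) : (r.orderEmbOfFin h i : ℕ) < m ↔ (i : ℕ) < #{i | Fin.castAdd n i ∈ r} := by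
  have hk := (card_filter_castAdd_add_card_filter_natAdd r).trans h
  obtain ⟨j, rfl⟩ := (finCongr hk).surjective i
  induction j using Fin.addCases with
  | left j => simp [orderEmbOfFin_cast_castAdd r h rfl rfl hk]
  | right j => simp [orderEmbOfFin_cast_natAdd r h rfl rfl hk]

theorem Matrix.fromBlocks_zero_submatrix_finSumFinEquiv_symm_eq_zero {R : Type*} [Zero R]
    (M : Matrix (Fin m) (Fin m) R) (N : Matrix (Fin n) (Fin n) R) {x y : Fin (m + n)}
    (hxy : ¬((x : ℕ) < m ↔ (y : ℕ) < m)) :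
    (fromBlocks M 0 0 N).submatrix finSumFinEquiv.symm finSumFinEquiv.symm x y = 0 := by
  induction x using Fin.addCases <;> induction y using Fin.addCases <;> simp_all

theorem Matrix.submatrix_orderEmbOfFin_blockDiagonal {R : Type*} [Zero R]
    (M : Matrix (Fin m) (Fin m) R) (N : Matrix (Fin n) (Fin n) R) (r s : Finset (Fin (m + n)))
    {a b k : ℕ} (hr : #r = k) (hs : #s = k)
    (hr₁ : #{i | Fin.castAdd n i ∈ r} = a) (hs₁ : #{i | Fin.castAdd n i ∈ s} = a)
    (hr₂ : #{j | Fin.natAdd m j ∈ r} = b) (hs₂ : #{j | Fin.natAdd m j ∈ s} = b)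
    (hk : a + b = k) :
    (((fromBlocks M 0 0 N).submatrix finSumFinEquiv.symm finSumFinEquiv.symm).submatrix
        (r.orderEmbOfFin hr) (s.orderEmbOfFin hs)).submatrix
        (finSumFinEquiv.trans (finCongr hk)) (finSumFinEquiv.trans (finCongr hk)) =
      fromBlocks
        (M.submatrix (({i | Fin.castAdd n i ∈ r} : Finset (Fin m)).orderEmbOfFin hr₁)
          (({i | Fin.castAdd n i ∈ s} : Finset (Fin m)).orderEmbOfFin hs₁)) 0 0
        (N.submatrix (({j | Fin.natAdd m j ∈ r} : Finset (Fin n)).orderEmbOfFin hr₂)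
          (({j | Fin.natAdd m j ∈ s} : Finset (Fin n)).orderEmbOfFin hs₂)) := by
  ext (i | i) (j | j) <;>
    simp [orderEmbOfFin_cast_castAdd r hr hr₁ hr₂ hk, orderEmbOfFin_cast_natAdd r hr hr₁ hr₂ hk,
      orderEmbOfFin_cast_castAdd s hs hs₁ hs₂ hk, orderEmbOfFin_cast_natAdd s hs hs₁ hs₂ hk]

end

/-- Minors of a block diagonal matrix `Q = M ⊕ N`: for row/column index sets `r, s` of equal
cardinality `k`, the minor `det Q[r;s]` factors as the product of the corresponding minors of
`M` and `N` when `|r ∩ [m]| = |s ∩ [m]|`, and vanishes otherwise. -/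
theorem det_submatrix_blockDiagonal {R : Type} [CommRing R] (m n k : ℕ)
    (M : Matrix (Fin m) (Fin m) R) (N : Matrix (Fin n) (Fin n) R)
    (r s : Finset (Fin (m + n))) (hr : r.card = k) (hs : s.card = k) :
    let Q : Matrix (Fin (m + n)) (Fin (m + n)) R :=
      (Matrix.fromBlocks M 0 0 N).submatrix finSumFinEquiv.symm finSumFinEquiv.symm
    let r₁ : Finset (Fin m) := Finset.univ.filter fun i => Fin.castAdd n i ∈ r
    let s₁ : Finset (Fin m) := Finset.univ.filter fun i => Fin.castAdd n i ∈ s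
    let r₂ : Finset (Fin n) := Finset.univ.filter fun j => Fin.natAdd m j ∈ r
    let s₂ : Finset (Fin n) := Finset.univ.filter fun j => Fin.natAdd m j ∈ s
    (∀ (e1 : s₁.card = r₁.card) (e2 : s₂.card = r₂.card),
      (Q.submatrix (⇑(r.orderEmbOfFin hr)) (⇑(s.orderEmbOfFin hs))).det
        = (M.submatrix (⇑(r₁.orderEmbOfFin rfl)) (⇑(s₁.orderEmbOfFin e1))).det
          * (N.submatrix (⇑(r₂.orderEmbOfFin rfl)) (⇑(s₂.orderEmbOfFin e2))).det) ∧
    (r₁.card ≠ s₁.card →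
      (Q.submatrix (⇑(r.orderEmbOfFin hr)) (⇑(s.orderEmbOfFin hs))).det = 0) := by
  intro Q r₁ s₁ r₂ s₂
  have hr₁₂ : #r₁ + #r₂ = k := (card_filter_castAdd_add_card_filter_natAdd r).trans hr
  have hs₁₂ : #s₁ + #s₂ = k := (card_filter_castAdd_add_card_filter_natAdd s).trans hs
  refine ⟨fun e1 e2 => ?_, fun hne => ?_⟩
  · rw [← det_submatrix_equiv_self (finSumFinEquiv.trans (finCongr hr₁₂))]
    exact (congrArg det (submatrix_orderEmbOfFin_blockDiagonal M N r s hr hs rfl e1 rfl e2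
      hr₁₂)).trans (det_fromBlocks_zero₁₂ _ _ _)
  · refine det_eq_zero_of_card_filter_ne _ (fun i => (i : ℕ) < #r₁) (fun j => (j : ℕ) < #s₁)
      (fun i j hij => ?_) ?_
    · apply fromBlocks_zero_submatrix_finSumFinEquiv_symm_eq_zero
      rwa [val_orderEmbOfFin_lt_iff, val_orderEmbOfFin_lt_iff]
    · rw [Fin.card_filter_val_lt, Fin.card_filter_val_lt]
      omega
end

section
/- Let G be a digraph on n vertices with Laplacian matrix L(G) over ℤ whose cokernel torsion (critical group) is K(G) ≅ ⊕_{i=1}^{n-1} ℤ_{f_i} with f_1 | f_2 | ⋯ | f_{n-1}. Then for all 1 ≤ i ≤ n-1, the evaluation of the i-th critical ideal at the out-degree vector d_G equals the principal ideal of ℤ generated by f_1·f_2⋯f_i. -/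
/-!
Evaluating the generalized Laplacian at the out-degrees gives `L`, so the evaluated critical ideal
is the ideal of `i × i` minors of `L`, or of `Lᵀ`, whose cokernel is `ℤ × K(G)`. Ideals of minors
are Fitting invariants: when `A` and `B` present the same module on `α` and `β` generators, lifting
each presentation map through the other shows that `[[A, Y], [0, 1]]` factors through
`[[1, 0], [X, B]]`, and these two stabilisations have the ideals of `A` and of `B`, shifted by
`|β|` and `|α|`. The module `ℤ × ∏ ℤ/f_j` is presented by the diagonal matrix of the `f_j` with a
zero row added, and by the divisibility chain every `i × i` minor of it is a multiple of the
leading one, `f_1 ⋯ f_i`.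
-/

open MvPolynomial Matrix

open Finset Fintype

theorem Finset.prod_filter_val_lt_card_dvd_prod {M : Type*} [CommMonoid M] {n : ℕ}
    {d : Fin n → M} (hd : ∀ i j, i ≤ j → d i ∣ d j) (S : Finset (Fin n)) :
    ∏ j ∈ univ.filter (fun j : Fin n => (j : ℕ) < #S), d j ∣ ∏ j ∈ S, d j := by
  induction S using Finset.induction_on_max with
  | empty => simp
  | insert a S hlt ih =>
    have hcard : #S ≤ a := by
      simpa using card_le_card fun x hx => mem_Iio.2 (hlt x hx)
    have hlt_n : #S < n := hcard.trans_lt a.isLt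
    have hfilter : univ.filter (fun j : Fin n => (j : ℕ) < #(insert a S)) =
        insert ⟨#S, hlt_n⟩ (univ.filter fun j : Fin n => (j : ℕ) < #S) := by
      ext j
      simp [card_insert_of_notMem fun ha => lt_irrefl a (hlt a ha), Fin.ext_iff]
      omega
    rw [hfilter, prod_insert (by simp), prod_insert fun ha => lt_irrefl a (hlt a ha)]
    exact mul_dvd_mul (hd _ _ hcard) ih

namespace Matrix

variable {R : Type*} [CommRing R] {α β γ δ : Type*}

/-- Row and column maps need not be injective: repeated indices only contribute zero minors. -/
def minorsIdeal (M : Matrix α β R) (k : ℕ) : Ideal R :=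
  Ideal.span {x | ∃ (r : Fin k → α) (s : Fin k → β), x = (M.submatrix r s).det}

theorem det_submatrix_mem_minorsIdeal (M : Matrix α β R) {k : ℕ} (r : Fin k → α)
    (s : Fin k → β) : (M.submatrix r s).det ∈ M.minorsIdeal k :=
  Ideal.subset_span ⟨r, s, rfl⟩

theorem det_submatrix_mem_minorsIdeal_of_equiv {ι : Type*} [Fintype ι] [DecidableEq ι]
    (M : Matrix α β R) {k : ℕ} (e : ι ≃ Fin k) (r : ι → α) (s : ι → β) :
    (M.submatrix r s).det ∈ M.minorsIdeal k := by
  rw [← det_submatrix_equiv_self e.symm, submatrix_submatrix]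
  exact det_submatrix_mem_minorsIdeal M _ _

theorem minorsIdeal_le_iff {M : Matrix α β R} {k : ℕ} {I : Ideal R} :
    M.minorsIdeal k ≤ I ↔ ∀ (r : Fin k → α) (s : Fin k → β), (M.submatrix r s).det ∈ I := by
  simp only [minorsIdeal, Ideal.span_le, Set.subset_def, Set.mem_ofPred_eq, SetLike.mem_coe]
  exact ⟨fun h r s => h _ ⟨r, s, rfl⟩, by rintro h _ ⟨r, s, rfl⟩; exact h r s⟩

theorem det_submatrix_eq_zero_of_not_injective_left (M : Matrix α β R) {k : ℕ}
    {r : Fin k → α} (hr : ¬ Function.Injective r) (s : Fin k → β) :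
    (M.submatrix r s).det = 0 := by
  obtain ⟨i, j, hij, hne⟩ := Function.not_injective_iff.1 hr
  exact det_zero_of_row_eq hne (by ext; simp [hij])

theorem det_submatrix_eq_zero_of_not_injective_right (M : Matrix α β R) {k : ℕ}
    (r : Fin k → α) {s : Fin k → β} (hs : ¬ Function.Injective s) :
    (M.submatrix r s).det = 0 := by
  obtain ⟨i, j, hij, hne⟩ := Function.not_injective_iff.1 hs
  exact det_zero_of_column_eq hne (by simp [hij])

theorem span_det_submatrix_injective (M : Matrix α β R) (k : ℕ) :
    Ideal.span {x | ∃ r : Fin k → α, ∃ s : Fin k → β, Function.Injective r ∧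
      Function.Injective s ∧ x = (M.submatrix r s).det} = M.minorsIdeal k := by
  refine le_antisymm (Ideal.span_mono ?_) (minorsIdeal_le_iff.2 fun r s => ?_)
  · rintro _ ⟨r, s, -, -, rfl⟩
    exact ⟨r, s, rfl⟩
  by_cases hr : Function.Injective r
  · by_cases hs : Function.Injective s
    · exact Ideal.subset_span ⟨r, s, hr, hs, rfl⟩
    · simp [det_submatrix_eq_zero_of_not_injective_right M r hs]
  · simp [det_submatrix_eq_zero_of_not_injective_left M hr s]

theorem map_minorsIdeal {S : Type*} [CommRing S] (f : R →+* S) (M : Matrix α β R) (k : ℕ) :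
    (M.minorsIdeal k).map f = (M.map f).minorsIdeal k := by
  simp only [minorsIdeal, Ideal.map_span]
  congr 1
  ext x
  simp [RingHom.map_det, submatrix_map, eq_comm]

theorem minorsIdeal_submatrix_le (M : Matrix α β R) (f : γ → α) (g : δ → β) (k : ℕ) :
    (M.submatrix f g).minorsIdeal k ≤ M.minorsIdeal k :=
  minorsIdeal_le_iff.2 fun r s => det_submatrix_mem_minorsIdeal M (f ∘ r) (g ∘ s)

theorem minorsIdeal_submatrix_equiv (M : Matrix α β R) (e₁ : γ ≃ α) (e₂ : δ ≃ β) (k : ℕ) :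
    (M.submatrix e₁ e₂).minorsIdeal k = M.minorsIdeal k := by
  refine le_antisymm (minorsIdeal_submatrix_le M e₁ e₂ k) ?_
  simpa using minorsIdeal_submatrix_le (M.submatrix e₁ e₂) e₁.symm e₂.symm k

theorem minorsIdeal_transpose_le (M : Matrix α β R) (k : ℕ) :
    Mᵀ.minorsIdeal k ≤ M.minorsIdeal k :=
  minorsIdeal_le_iff.2 fun r s => by
    rw [← transpose_submatrix, det_transpose]
    exact det_submatrix_mem_minorsIdeal M s r

theorem minorsIdeal_transpose (M : Matrix α β R) (k : ℕ) : Mᵀ.minorsIdeal k = M.minorsIdeal k :=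
  le_antisymm (minorsIdeal_transpose_le M k) (by simpa using minorsIdeal_transpose_le Mᵀ k)

theorem det_mem_of_forall_det_submatrix_succAbove_mem {I : Ideal R} {j : ℕ}
    (A : Matrix (Fin (j + 1)) (Fin (j + 1)) R) (i : Fin (j + 1))
    (h : ∀ x : Fin (j + 1), (A.submatrix i.succAbove x.succAbove).det ∈ I) : A.det ∈ I := by
  rw [det_succ_row A i]
  exact sum_mem fun x _ => I.mul_mem_left _ (h x)

theorem minorsIdeal_antitone (M : Matrix α β R) : Antitone M.minorsIdeal :=
  antitone_nat_of_succ_le fun _ => minorsIdeal_le_iff.2 fun _ _ =>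
    det_mem_of_forall_det_submatrix_succAbove_mem _ 0 fun _ => det_submatrix_mem_minorsIdeal M _ _

theorem det_mul_eq_sum_prod_mul_det_submatrix [Fintype β] {k : ℕ} (A : Matrix (Fin k) β R)
    (B : Matrix β (Fin k) R) :
    (A * B).det = ∑ p : Fin k → β, (∏ i, B (p i) i) * (A.submatrix id p).det := by
  calc (A * B).det
      = ∑ p : Fin k → β, ∑ σ : Equiv.Perm (Fin k),
          Equiv.Perm.sign σ • ∏ i, A (σ i) (p i) * B (p i) i := by
        simp only [det_apply, mul_apply, prod_univ_sum, smul_sum, Fintype.piFinset_univ]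
        rw [Finset.sum_comm]
    _ = _ := by
        refine sum_congr rfl fun p _ => ?_
        rw [mul_comm, det_apply, sum_mul]
        refine sum_congr rfl fun σ _ => ?_
        rw [smul_mul_assoc, ← prod_mul_distrib]
        simp

theorem minorsIdeal_mul_le_left [Fintype β] (M : Matrix α β R) (N : Matrix β γ R) (k : ℕ) :
    (M * N).minorsIdeal k ≤ M.minorsIdeal k :=
  minorsIdeal_le_iff.2 fun r s => by
    rw [submatrix_mul M N r id s Function.bijective_id, det_mul_eq_sum_prod_mul_det_submatrix]
    exact sum_mem fun p _ => Ideal.mul_mem_left _ _ (det_submatrix_mem_minorsIdeal M r p)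

theorem minorsIdeal_mul_le_right [Fintype β] (M : Matrix α β R) (N : Matrix β γ R) (k : ℕ) :
    (M * N).minorsIdeal k ≤ N.minorsIdeal k := by
  rw [← minorsIdeal_transpose, transpose_mul, ← minorsIdeal_transpose N]
  exact minorsIdeal_mul_le_left Nᵀ Mᵀ k

theorem minorsIdeal_isUnit_mul [Fintype α] [DecidableEq α] {U : Matrix α α R} (hU : IsUnit U)
    (M : Matrix α β R) (k : ℕ) : (U * M).minorsIdeal k = M.minorsIdeal k := by
  obtain ⟨u, rfl⟩ := hU
  refine le_antisymm (minorsIdeal_mul_le_right _ M k) ?_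
  have hM : M = (↑u⁻¹ : Matrix α α R) * ((u : Matrix α α R) * M) := by
    rw [← Matrix.mul_assoc, Units.inv_mul, Matrix.one_mul]
  conv_lhs => rw [hM]
  exact minorsIdeal_mul_le_right _ _ k

theorem det_submatrix_fromRows_mem (T : Matrix α γ R) (D : Matrix β γ R) {j : ℕ}
    (r : Fin j → α ⊕ β) (s : Fin j → γ) :
    ((fromRows T D).submatrix r s).det ∈ T.minorsIdeal #{x | (r x).isLeft} := by
  induction j with
  | zero => simpa using det_submatrix_mem_minorsIdeal T finZeroElim finZeroElim
  | succ j ih =>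
    -- Laplace expansion along a row of `D` keeps every row taken from `T`.
    by_cases hr : ∃ i, ¬ (r i).isLeft
    · obtain ⟨i, hi⟩ := hr
      have hcount : #{x | (r (i.succAbove x)).isLeft} = #{x | (r x).isLeft} := by
        simp only [card_filter, Fin.sum_univ_succAbove _ i, hi, Bool.false_eq_true, if_false,
          zero_add]
      refine det_mem_of_forall_det_submatrix_succAbove_mem _ i fun x => ?_
      rw [← hcount, submatrix_submatrix]
      exact ih _ _
    · push Not at hr
      choose r' hr' using fun x => Sum.isLeft_iff.1 (hr x)
      have hsub : (fromRows T D).submatrix r s = T.submatrix r' s := by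
        ext x y
        simp [hr']
      rw [hsub, filter_true_of_mem fun x _ => hr x, card_univ, Fintype.card_fin]
      exact det_submatrix_mem_minorsIdeal T r' s

theorem minorsIdeal_fromRows_le [Fintype β] (T : Matrix α γ R) (D : Matrix β γ R) (k : ℕ) :
    (fromRows T D).minorsIdeal (k + card β) ≤ T.minorsIdeal k := by
  refine minorsIdeal_le_iff.2 fun r s => ?_
  by_cases hr : Function.Injective r
  · have hright : #{x | ¬ (r x).isLeft} ≤ card β := by
      refine (card_le_card_of_injOn r (t := univ.map .inr) (fun x hx => ?_) hr.injOn).trans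
        (by simp)
      obtain ⟨b, hb⟩ := Sum.isRight_iff.1 (by simpa using hx)
      simp [hb]
    have hsplit := card_filter_add_card_filter_not (s := univ) fun x => (r x).isLeft
    rw [card_univ, Fintype.card_fin] at hsplit
    exact T.minorsIdeal_antitone (by omega) (det_submatrix_fromRows_mem T D r s)
  · simp [det_submatrix_eq_zero_of_not_injective_left _ hr s]

theorem minorsIdeal_fromCols_zero_le [Fintype γ] [DecidableEq γ] (B : Matrix α γ R) (k : ℕ) :
    (fromCols B (0 : Matrix α δ R)).minorsIdeal k ≤ B.minorsIdeal k := by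
  have hB : fromCols B (0 : Matrix α δ R) =
      B * fromCols (1 : Matrix γ γ R) (0 : Matrix γ δ R) := by
    rw [mul_fromCols, Matrix.mul_one, Matrix.mul_zero]
  rw [hB]
  exact minorsIdeal_mul_le_left _ _ k

theorem minorsIdeal_fromRows_zero [Fintype α] [DecidableEq α] (A : Matrix α γ R) (k : ℕ) :
    (fromRows (0 : Matrix β γ R) A).minorsIdeal k = A.minorsIdeal k := by
  have hmul : fromRows (0 : Matrix β γ R) A = fromRows (0 : Matrix β α R) 1 * A := by
    rw [fromRows_mul, Matrix.zero_mul, Matrix.one_mul]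
  have hsub : (fromRows (0 : Matrix β γ R) A).submatrix Sum.inr id = A := by ext; simp
  refine le_antisymm ?_ ?_
  · rw [hmul]
    exact minorsIdeal_mul_le_right _ _ k
  · simpa [hsub] using minorsIdeal_submatrix_le (fromRows (0 : Matrix β γ R) A) Sum.inr id k

theorem minorsIdeal_fromBlocks_one [Fintype β] [DecidableEq β] [Fintype γ] [DecidableEq γ]
    (B : Matrix α γ R) (k : ℕ) :
    (fromBlocks B 0 0 (1 : Matrix β β R)).minorsIdeal (k + card β) = B.minorsIdeal k := by
  refine le_antisymm ?_ (minorsIdeal_le_iff.2 fun r s => ?_)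
  · rw [← fromRows_fromCols_eq_fromBlocks]
    exact (minorsIdeal_fromRows_le _ _ k).trans (minorsIdeal_fromCols_zero_le B k)
  · have hsub : (fromBlocks B 0 0 (1 : Matrix β β R)).submatrix (Sum.map r id) (Sum.map s id) =
        fromBlocks (B.submatrix r s) 0 0 1 := by
      ext (x | x) (y | y) <;> simp [one_apply]
    have hmem := det_submatrix_mem_minorsIdeal_of_equiv (fromBlocks B 0 0 (1 : Matrix β β R))
      ((Equiv.sumCongr (Equiv.refl _) (equivFin β)).trans finSumFinEquiv) (Sum.map r id)
      (Sum.map s id)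
    simpa [hsub, det_fromBlocks_zero₂₁] using hmem

structure Presents {M : Type*} [AddCommGroup M] [Module R M] [Fintype γ] (A : Matrix α γ R)
    (π : (α → R) →ₗ[R] M) : Prop where
  surjective : Function.Surjective π
  ker_eq : LinearMap.ker π = LinearMap.range A.mulVecLin

theorem exists_mulVec_lift [Fintype β] [DecidableEq β] {M : Type*} [AddCommGroup M] [Module R M]
    {π : (α → R) →ₗ[R] M} (hπ : Function.Surjective π) (φ : (β → R) →ₗ[R] M) :
    ∃ X : Matrix α β R, ∀ v, π (X *ᵥ v) = φ v := by
  obtain ⟨h, hh⟩ := Module.projective_lifting_property π φ hπ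
  exact ⟨LinearMap.toMatrix' h, fun v => by rw [← toLin'_apply, toLin'_toMatrix', ← hh]; rfl⟩

theorem exists_eq_mul_of_forall_mulVec_mem [Fintype β] [Fintype γ] [DecidableEq γ]
    {B : Matrix α β R} {N : Matrix α γ R}
    (h : ∀ v, N *ᵥ v ∈ LinearMap.range B.mulVecLin) : ∃ W : Matrix β γ R, N = B * W := by
  choose w hw using fun j => h (Pi.single j 1)
  refine ⟨(of w)ᵀ, ext_of_mulVec_single fun j => ?_⟩
  rw [← hw j, ← mulVec_mulVec, mulVec_single_one]
  rfl

theorem minorsIdeal_le_of_presents [Fintype α] [DecidableEq α] [Fintype β] [DecidableEq β]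
    [Fintype γ] [DecidableEq γ] [Fintype δ] [DecidableEq δ] {M : Type*} [AddCommGroup M]
    [Module R M] {A : Matrix α γ R} {B : Matrix β δ R} {π₁ : (α → R) →ₗ[R] M}
    {π₂ : (β → R) →ₗ[R] M} (hA : A.Presents π₁) (hB : B.Presents π₂) {a b : ℕ}
    (hab : a + card β = b + card α) : A.minorsIdeal a ≤ B.minorsIdeal b := by
  obtain ⟨X, hX⟩ := exists_mulVec_lift hB.surjective π₁
  obtain ⟨Y, hY⟩ := exists_mulVec_lift hA.surjective π₂
  have hker : ∀ {w}, π₂ w = 0 → w ∈ LinearMap.range B.mulVecLin := fun hw => by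
    rwa [← hB.ker_eq, LinearMap.mem_ker]
  obtain ⟨P, hP⟩ : ∃ P, X * A = B * P := exists_eq_mul_of_forall_mulVec_mem fun v => hker <| by
    rw [← mulVec_mulVec, hX, ← LinearMap.mem_ker, hA.ker_eq]
    exact ⟨v, rfl⟩
  obtain ⟨Q, hQ⟩ : ∃ Q, 1 - X * Y = B * Q := exists_eq_mul_of_forall_mulVec_mem fun v => hker <| by
    rw [sub_mulVec, one_mulVec, ← mulVec_mulVec, map_sub, hX, hY, sub_self]
  let U₁ : Matrix (α ⊕ β) (α ⊕ β) R := fromBlocks 1 Y 0 1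
  let U₂ : Matrix (α ⊕ β) (α ⊕ β) R := fromBlocks 1 0 X 1
  let Aₑ : Matrix (α ⊕ β) (γ ⊕ β) R := fromBlocks A 0 0 1
  let Bₑ : Matrix (α ⊕ β) (α ⊕ δ) R := fromBlocks 1 0 0 B
  have hfactor : U₁ * Aₑ = U₂ * Bₑ * fromBlocks A Y (-P) Q := by
    simp only [U₁, U₂, Aₑ, Bₑ, fromBlocks_multiply]
    congr 1 <;> simp [hP, ← hQ]
  have hU₁ : IsUnit U₁ := by simp [U₁, isUnit_iff_isUnit_det]
  have hU₂ : IsUnit U₂ := by simp [U₂, isUnit_iff_isUnit_det]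
  calc A.minorsIdeal a
      = (U₁ * Aₑ).minorsIdeal (a + card β) := by
        rw [minorsIdeal_isUnit_mul hU₁, minorsIdeal_fromBlocks_one]
    _ ≤ (U₂ * Bₑ).minorsIdeal (b + card α) := by
        rw [hfactor, hab]
        exact minorsIdeal_mul_le_left _ _ _
    _ = (fromBlocks B 0 0 (1 : Matrix α α R)).minorsIdeal (b + card α) := by
        have hswap : Bₑ = (fromBlocks B 0 0 (1 : Matrix α α R)).submatrix (Equiv.sumComm α β)
            (Equiv.sumComm α δ) := (fromBlocks_submatrix_sum_swap_sum_swap _ _ _ _).symm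
        rw [minorsIdeal_isUnit_mul hU₂, hswap, minorsIdeal_submatrix_equiv]
    _ = B.minorsIdeal b := minorsIdeal_fromBlocks_one B b

theorem minorsIdeal_eq_of_presents [Fintype α] [DecidableEq α] [Fintype β] [DecidableEq β]
    [Fintype γ] [DecidableEq γ] [Fintype δ] [DecidableEq δ] {M : Type*} [AddCommGroup M]
    [Module R M] {A : Matrix α γ R} {B : Matrix β δ R} {π₁ : (α → R) →ₗ[R] M}
    {π₂ : (β → R) →ₗ[R] M} (hA : A.Presents π₁) (hB : B.Presents π₂) {a b : ℕ}
    (hab : a + card β = b + card α) : A.minorsIdeal a = B.minorsIdeal b :=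
  le_antisymm (minorsIdeal_le_of_presents hA hB hab) (minorsIdeal_le_of_presents hB hA hab.symm)

theorem presents_mkQ_comp {M : Type*} [AddCommGroup M] [Module R M] [Fintype γ]
    (A : Matrix α γ R) (e : ((α → R) ⧸ LinearMap.range A.mulVecLin) ≃ₗ[R] M) :
    A.Presents (e.toLinearMap ∘ₗ (LinearMap.range A.mulVecLin).mkQ) where
  surjective := e.surjective.comp (Submodule.mkQ_surjective _)
  ker_eq := by rw [LinearMap.ker_comp, LinearEquiv.ker, Submodule.comap_bot, Submodule.ker_mkQ]

theorem Presents.fromRows_zero {M : Type*} [AddCommGroup M] [Module R M] [Fintype γ]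
    {A : Matrix α γ R} {π : (α → R) →ₗ[R] M} (hA : A.Presents π) :
    (fromRows (0 : Matrix Unit γ R) A).Presents
      ((LinearMap.proj (Sum.inl ())).prod (π ∘ₗ LinearMap.funLeft R R Sum.inr)) where
  surjective := by
    rintro ⟨t, y⟩
    obtain ⟨v, rfl⟩ := hA.surjective y
    exact ⟨Sum.elim (fun _ => t) v, rfl⟩
  ker_eq := by
    ext w
    constructor
    · intro hw
      obtain ⟨hinl, hinr⟩ := Prod.mk_eq_zero.1 hw
      obtain ⟨y, hy⟩ : w ∘ Sum.inr ∈ LinearMap.range A.mulVecLin := hA.ker_eq ▸ hinr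
      refine ⟨y, funext fun x => ?_⟩
      rcases x with ⟨⟩ | a
      · simpa using hinl.symm
      · simpa using congrFun hy a
    · rintro ⟨y, rfl⟩
      have hy : A *ᵥ y ∈ LinearMap.ker π := hA.ker_eq ▸ ⟨y, rfl⟩
      exact Prod.ext (by simp [fromRows_mulVec]) hy

theorem presents_diagonal_intCast {ι : Type*} [Fintype ι] [DecidableEq ι] (f : ι → ℕ) :
    (diagonal fun i => (f i : ℤ)).Presents
      (LinearMap.pi fun i => (Int.castAddHom (ZMod (f i))).toIntLinearMap ∘ₗ LinearMap.proj i) where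
  surjective y := by
    choose v hv using fun i => ZMod.intCast_surjective (y i)
    exact ⟨v, funext hv⟩
  ker_eq := by
    ext v
    simp only [LinearMap.mem_ker, LinearMap.mem_range, mulVecLin_apply, mulVec_diagonal,
      funext_iff, LinearMap.pi_apply, LinearMap.comp_apply, LinearMap.proj_apply,
      AddMonoidHom.coe_toIntLinearMap, Int.coe_castAddHom, Pi.zero_apply,
      ZMod.intCast_zmod_eq_zero_iff_dvd, Dvd.dvd, eq_comm]
    exact Classical.skolem

theorem minorsIdeal_diagonal {n k : ℕ} (d : Fin n → R) (hd : ∀ i j, i ≤ j → d i ∣ d j)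
    (hk : k ≤ n) :
    (diagonal d).minorsIdeal k =
      Ideal.span {∏ j ∈ univ.filter (fun j : Fin n => (j : ℕ) < k), d j} := by
  refine le_antisymm (minorsIdeal_le_iff.2 fun r s => ?_) ?_
  · by_cases hr : Function.Injective r
    · let E : Matrix (Fin k) (Fin k) R := of fun x y => if r x = s y then 1 else 0
      have hsub : (diagonal d).submatrix r s = of fun x y => d (r x) * E x y := by
        ext x y
        simp [E, diagonal_apply]
      have hprod : ∏ x, d (r x) = ∏ j ∈ univ.image r, d j := (prod_image hr.injOn).symm
      have hcard : #(univ.image r) = k := by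
        rw [card_image_of_injective _ hr, card_univ, Fintype.card_fin]
      rw [hsub, det_mul_column, hprod, Ideal.mem_span_singleton]
      have hdvd := prod_filter_val_lt_card_dvd_prod hd (univ.image r)
      rw [hcard] at hdvd
      exact dvd_mul_of_dvd_left hdvd _
    · simp [det_submatrix_eq_zero_of_not_injective_left _ hr s]
  · rw [Ideal.span_le, Set.singleton_subset_iff]
    have hmem := det_submatrix_mem_minorsIdeal (diagonal d) (Fin.castLE hk) (Fin.castLE hk)
    have hfilter : univ.filter (fun j : Fin n => (j : ℕ) < k) = univ.map (Fin.castLEEmb hk) := by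
      ext j
      simp only [mem_filter, mem_univ, true_and, mem_map, Fin.castLEEmb_apply]
      exact ⟨fun h => ⟨⟨j, h⟩, rfl⟩, by rintro ⟨i, rfl⟩; exact i.isLt⟩
    rw [submatrix_diagonal _ _ (Fin.castLE_injective hk), det_diagonal] at hmem
    rwa [hfilter, prod_map]

end Matrix

theorem critIdeal_eq_minorsIdeal {P : Type} [CommRing P] {V : Type} [Fintype V] [DecidableEq V]
    (m : V → V → ℕ) (i : ℕ) : critIdeal (P := P) m i = (glap m).minorsIdeal i :=
  Matrix.span_det_submatrix_injective _ _

theorem glap_map_eval {P : Type} [CommRing P] {V : Type} [Fintype V] [DecidableEq V]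
    (m : V → V → ℕ) (d : V → P) :
    (glap (P := P) m).map (eval d) = of fun u v => if u = v then d u else -(m u v : P) := by
  ext u v
  by_cases h : u = v <;> simp [glap, h]

/-- Let `G` be a digraph on `n` vertices whose (out-degree) Laplacian `L` over `ℤ` has
cokernel `ℤ ⊕ K(G)` with `K(G) ≅ ⊕ ℤ/f_i` and `f_1 ∣ f_2 ∣ ⋯ ∣ f_{n-1}`.  Then for all
`1 ≤ i ≤ n - 1`, the evaluation of the `i`-th critical ideal at the out-degree vector equals
the principal ideal of `ℤ` generated by `f_1 ⋯ f_i`. -/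
theorem critIdeal_eval_degree_eq_invariantFactors (n : ℕ) (m : Fin n → Fin n → ℕ)
    (f : Fin (n - 1) → ℕ) (hdvd : ∀ i j : Fin (n - 1), i ≤ j → f i ∣ f j)
    (L : Matrix (Fin n) (Fin n) ℤ)
    (hL : L = Matrix.of fun u v : Fin n =>
      if u = v then ∑ w ∈ Finset.univ.erase u, (m u w : ℤ) else -(m u v : ℤ))
    (e : ((Fin n → ℤ) ⧸ LinearMap.range (Matrix.toLin' Lᵀ)) ≃ₗ[ℤ]
      ℤ × ((i : Fin (n - 1)) → ZMod (f i))) :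
    ∀ i : ℕ, 1 ≤ i → i ≤ n - 1 →
      Ideal.map (MvPolynomial.eval fun v : Fin n => ∑ w ∈ Finset.univ.erase v, (m v w : ℤ))
          (critIdeal (P := ℤ) m i)
        = Ideal.span {(∏ j ∈ Finset.univ.filter (fun j : Fin (n - 1) => (j : ℕ) < i),
            (f j : ℤ))} := by
  intro i hi hin
  have hLeval : (glap m).map (eval fun v => ∑ w ∈ univ.erase v, (m v w : ℤ)) = L := by
    rw [glap_map_eval, hL]
  have hchain (j j' : Fin (n - 1)) (h : j ≤ j') : (f j : ℤ) ∣ f j' :=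
    Int.natCast_dvd_natCast.2 (hdvd j j' h)
  rw [critIdeal_eq_minorsIdeal, map_minorsIdeal, hLeval, ← minorsIdeal_transpose,
    minorsIdeal_eq_of_presents (presents_mkQ_comp Lᵀ e)
      (presents_diagonal_intCast f).fromRows_zero (b := i) (by simp; omega),
    minorsIdeal_fromRows_zero, minorsIdeal_diagonal _ hchain hin]
end

section
/- Let G be a connected Eulerian digraph (d^+(v) = d^-(v) for all v) on n vertices with integer Laplacian L(G), and let v be a vertex. Then the Laplacian L(G) is equivalent over ℤ (via unimodular row and column operations) to the block diagonal matrix 0 ⊕ L(G,v), where L(G,v) is the reduced Laplacian obtained by deleting row and column v. In particular, coker(L(G)^t) ≅ ℤ ⊕ coker(L(G,v)^t). -/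
/-!
Every row of `L` sums to zero, and so does every column because `G` is Eulerian. Hence adding all
other rows to row `v` and then all other columns to column `v` is a unimodular change of `L` that
clears row and column `v`, leaving `0 ⊕ L(G,v)`. Cokernels are invariant under unimodular changes,
and the cokernel of `0 ⊕ L(G,v)ᵗ` is `ℤ ⊕ coker(L(G,v)ᵗ)`.
-/

open Matrix

section Laplacian

variable {ι R : Type*} [Fintype ι] [DecidableEq ι] [Ring R]

def laplacian (a : ι → ι → R) : Matrix ι ι R :=
  of fun u w => if u = w then ∑ z ∈ Finset.univ.erase u, a u z else -a u w

theorem laplacian_eq_diagonal_sub (a : ι → ι → R) :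
    laplacian a = diagonal (fun u => ∑ w, a u w) - of a := by
  ext u w
  by_cases h : u = w
  · subst h
    simp [laplacian, Finset.sum_erase_eq_sub]
  · simp [laplacian, h]

theorem laplacian_mulVec_one (a : ι → ι → R) : laplacian a *ᵥ 1 = 0 := by
  ext u
  simp [laplacian_eq_diagonal_sub, mulVec, dotProduct, diagonal_apply]

theorem one_vecMul_laplacian {a : ι → ι → R} (heul : ∀ u, ∑ w, a u w = ∑ w, a w u) :
    1 ᵥ* laplacian a = 0 := by
  ext u
  simp [laplacian_eq_diagonal_sub, vecMul, dotProduct, diagonal_apply, heul]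

end Laplacian

namespace Matrix

def zeroRowCol {ι R : Type*} [DecidableEq ι] [Zero R] (A : Matrix ι ι R) (v : ι) : Matrix ι ι R :=
  of fun u w => if u = v ∨ w = v then 0 else A u w

theorem zeroRowCol_transpose {ι R : Type*} [DecidableEq ι] [Zero R] (A : Matrix ι ι R) (v : ι) :
    (A.zeroRowCol v)ᵀ = Aᵀ.zeroRowCol v := by
  ext u w
  simp [zeroRowCol, or_comm]

variable {ι R : Type*} [Fintype ι] [DecidableEq ι] [CommRing R]

theorem det_updateRow_one (v : ι) (c : ι → R) :
    ((1 : Matrix ι ι R).updateRow v c).det = c v := by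
  convert det_updateRow_sum (1 : Matrix ι ι R) v c using 3
  · ext j
    simp [Finset.sum_apply, one_apply]
  · simp

theorem exists_isUnit_det_mul_mul_eq_zeroRowCol {A : Matrix ι ι R} (v : ι) (hrow : A *ᵥ 1 = 0)
    (hcol : 1 ᵥ* A = 0) :
    ∃ P Q : Matrix ι ι R, IsUnit P.det ∧ IsUnit Q.det ∧ P * A * Q = A.zeroRowCol v := by
  refine ⟨(1 : Matrix ι ι R).updateRow v 1, (1 : Matrix ι ι R).updateCol v 1, ?_, ?_, ?_⟩
  · simp [det_updateRow_one]
  · rw [← det_transpose, ← updateRow_transpose, transpose_one, det_updateRow_one]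
    exact isUnit_one
  · rw [updateRow_mul, one_mul, hcol, mul_updateCol, mul_one, updateRow_mulVec, hrow]
    ext u w
    by_cases hu : u = v <;> by_cases hw : w = v <;>
      simp [zeroRowCol, updateRow_apply, hu, hw]

end Matrix

noncomputable def Submodule.quotientProd {R M N : Type*} [Ring R] [AddCommGroup M] [Module R M]
    [AddCommGroup N] [Module R N] (p : Submodule R M) (q : Submodule R N) :
    ((M × N) ⧸ p.prod q) ≃ₗ[R] (M ⧸ p) × (N ⧸ q) :=
  (Submodule.quotEquivOfEq _ _ (by rw [LinearMap.ker_prodMap, ker_mkQ, ker_mkQ])).trans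
    (LinearMap.quotKerEquivOfSurjective (p.mkQ.prodMap q.mkQ)
      (p.mkQ_surjective.prodMap q.mkQ_surjective))

def LinearEquiv.piFinSuccAbove (R M : Type*) [Semiring R] [AddCommMonoid M] [Module R M] {n : ℕ}
    (v : Fin (n + 1)) : (Fin (n + 1) → M) ≃ₗ[R] M × (Fin n → M) :=
  { (Fin.insertNthEquiv (fun _ => M) v).symm with
    map_add' := fun _ _ => rfl
    map_smul' := fun _ _ => rfl }

namespace Matrix

variable {R : Type*} [CommRing R]

noncomputable def quotRangeToLin'MulMulEquiv {m n : Type*} [Fintype m] [DecidableEq m]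
    [Fintype n] [DecidableEq n] (A : Matrix m n R) {P : Matrix m m R} {Q : Matrix n n R}
    (hP : IsUnit P.det) (hQ : IsUnit Q.det) :
    ((m → R) ⧸ LinearMap.range (toLin' (P * A * Q))) ≃ₗ[R] (m → R) ⧸ LinearMap.range (toLin' A) :=
  let eP := P.toLinearEquiv' (P.invertibleOfIsUnitDet hP)
  let eQ := Q.toLinearEquiv' (Q.invertibleOfIsUnitDet hQ)
  (Submodule.Quotient.equiv _ _ eP <| by
    have hQsurj : LinearMap.range (toLin' Q) = ⊤ := eQ.range
    rw [toLin'_mul, toLin'_mul, LinearMap.range_comp_of_range_eq_top _ hQsurj,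
      LinearMap.range_comp]
    rfl).symm

variable {n : ℕ}

theorem piFinSuccAbove_comp_toLin'_zeroRowCol (A : Matrix (Fin (n + 1)) (Fin (n + 1)) R)
    (v : Fin (n + 1)) :
    (LinearEquiv.piFinSuccAbove R R v).toLinearMap ∘ₗ toLin' (A.zeroRowCol v) =
      (0 : R →ₗ[R] R).prodMap (toLin' (A.submatrix v.succAbove v.succAbove)) ∘ₗ
        (LinearEquiv.piFinSuccAbove R R v).toLinearMap := by
  refine LinearMap.ext fun x => Prod.ext ?_ ?_
  · simp [LinearEquiv.piFinSuccAbove, zeroRowCol, mulVec, dotProduct]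
  · ext i
    simp [LinearEquiv.piFinSuccAbove, zeroRowCol, mulVec, dotProduct, Fin.removeNth,
      Fin.sum_univ_succAbove _ v]

noncomputable def quotRangeToLin'ZeroRowColEquiv (A : Matrix (Fin (n + 1)) (Fin (n + 1)) R)
    (v : Fin (n + 1)) :
    ((Fin (n + 1) → R) ⧸ LinearMap.range (toLin' (A.zeroRowCol v))) ≃ₗ[R]
      R × ((Fin n → R) ⧸ LinearMap.range (toLin' (A.submatrix v.succAbove v.succAbove))) :=
  let e := LinearEquiv.piFinSuccAbove R R v
  let q := LinearMap.range (toLin' (A.submatrix v.succAbove v.succAbove))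
  (Submodule.Quotient.equiv _ ((⊥ : Submodule R R).prod q) e <| by
    rw [← LinearMap.range_comp, piFinSuccAbove_comp_toLin'_zeroRowCol,
      LinearMap.range_comp_of_range_eq_top _ e.range, LinearMap.range_prodMap,
      LinearMap.range_zero]).trans <|
    (Submodule.quotientProd ⊥ q).trans <|
      (Submodule.quotEquivOfEqBot ⊥ rfl).prodCongr (LinearEquiv.refl _ _)

end Matrix

theorem laplacian_equiv_reduced_general (n : ℕ) (m : Fin (n + 1) → Fin (n + 1) → ℕ)
    (v : Fin (n + 1))
    (heul : ∀ u : Fin (n + 1), ∑ w, m u w = ∑ w, m w u)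
    (L : Matrix (Fin (n + 1)) (Fin (n + 1)) ℤ)
    (hL : L = Matrix.of fun u w =>
      if u = w then ∑ z ∈ Finset.univ.erase u, (m u z : ℤ) else -(m u w : ℤ)) :
    (∃ Pm Qm : Matrix (Fin (n + 1)) (Fin (n + 1)) ℤ,
      IsUnit Pm.det ∧ IsUnit Qm.det ∧
        Pm * L * Qm = Matrix.of fun u w => if u = v ∨ w = v then 0 else L u w) ∧
    Nonempty (((Fin (n + 1) → ℤ) ⧸ LinearMap.range (Matrix.toLin' Lᵀ)) ≃ₗ[ℤ]
      ℤ × ((Fin n → ℤ) ⧸ LinearMap.range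
        (Matrix.toLin' (L.submatrix v.succAbove v.succAbove)ᵀ))) := by
  replace hL : L = laplacian fun u w => (m u w : ℤ) := hL
  have hrow : L *ᵥ 1 = 0 := hL ▸ laplacian_mulVec_one _
  have hcol : 1 ᵥ* L = 0 := hL ▸ one_vecMul_laplacian (by exact_mod_cast heul)
  obtain ⟨P, Q, hP, hQ, hPLQ⟩ := exists_isUnit_det_mul_mul_eq_zeroRowCol v hrow hcol
  refine ⟨⟨P, Q, hP, hQ, hPLQ⟩, ?_⟩
  have hPLQT : Qᵀ * Lᵀ * Pᵀ = Lᵀ.zeroRowCol v := by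
    rw [← zeroRowCol_transpose, ← hPLQ, transpose_mul, transpose_mul, mul_assoc]
  have e := (quotRangeToLin'MulMulEquiv Lᵀ (det_transpose Q ▸ hQ) (det_transpose P ▸ hP)).symm
  rw [hPLQT] at e
  rw [transpose_submatrix]
  exact ⟨e.trans (quotRangeToLin'ZeroRowColEquiv Lᵀ v)⟩

/-- For a connected Eulerian digraph `G` on `n + 1` vertices and a vertex `v`, the integer
Laplacian `L(G)` is equivalent over `ℤ` (via unimodular matrices) to the block diagonal
matrix `0 ⊕ L(G,v)` (the matrix obtained from `L(G)` by zeroing out row and column `v`,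
whose nonzero block is the reduced Laplacian); consequently
`coker(L(G)ᵗ) ≅ ℤ ⊕ coker(L(G,v)ᵗ)`. -/
theorem laplacian_equiv_reduced (n : ℕ) (m : Fin (n + 1) → Fin (n + 1) → ℕ)
    (v : Fin (n + 1))
    (hconn : ∀ u w : Fin (n + 1), Relation.ReflTransGen (fun a b => 0 < m a b) u w)
    (heul : ∀ u : Fin (n + 1), ∑ w, m u w = ∑ w, m w u)
    (L : Matrix (Fin (n + 1)) (Fin (n + 1)) ℤ)
    (hL : L = Matrix.of fun u w =>
      if u = w then ∑ z ∈ Finset.univ.erase u, (m u z : ℤ) else -(m u w : ℤ)) :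
    (∃ Pm Qm : Matrix (Fin (n + 1)) (Fin (n + 1)) ℤ,
      IsUnit Pm.det ∧ IsUnit Qm.det ∧
        Pm * L * Qm = Matrix.of fun u w => if u = v ∨ w = v then 0 else L u w) ∧
    Nonempty (((Fin (n + 1) → ℤ) ⧸ LinearMap.range (Matrix.toLin' Lᵀ)) ≃ₗ[ℤ]
      ℤ × ((Fin n → ℤ) ⧸ LinearMap.range
        (Matrix.toLin' (L.submatrix v.succAbove v.succAbove)ᵀ))) :=
  laplacian_equiv_reduced_general n m v heul L hL
end

section
/- For any digraph G (possibly with multiple edges) and any vertex v of G, γ_P(G) - γ_P(G∖v) ≤ 2, where γ_P(H) = max{ i : I_i(H,X) = (1) } is the number of trivial critical ideals of H over the base ring P. -/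
open MvPolynomial Matrix

/-- `γ_P(G)`: the number of critical ideals of `G` that are trivial, i.e. the largest `i`
with `I_i(G,X) = (1)`. -/
noncomputable def gammaP (P : Type) [CommRing P] {V : Type} [Fintype V] [DecidableEq V]
    (m : V → V → ℕ) : ℕ :=
  sSup {i : ℕ | critIdeal (P := P) m i = ⊤}

section Helpers

variable {P : Type} [CommRing P] {V : Type} [Fintype V] [DecidableEq V]

/-- A minor is a generator of the corresponding critical ideal. -/
lemma gen_mem_critIdeal (m : V → V → ℕ) {i : ℕ} (r s : Fin i → V)
    (hr : Function.Injective r) (hs : Function.Injective s) :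
    ((glap (P := P) m).submatrix r s).det ∈ critIdeal (P := P) m i :=
  Ideal.subset_span ⟨r, s, hr, hs, rfl⟩

/-- Laplace expansion along a row: if all the cofactor minors lie in an ideal, so does
the determinant. -/
lemma det_mem_of_row {R : Type*} [CommRing R] {k : ℕ}
    (M : Matrix (Fin (k + 1)) (Fin (k + 1)) R) (a : Fin (k + 1)) (J : Ideal R)
    (h : ∀ b : Fin (k + 1), (M.submatrix a.succAbove b.succAbove).det ∈ J) : M.det ∈ J := by
  rw [Matrix.det_succ_row M a]
  exact Ideal.sum_mem _ fun b _ => Ideal.mul_mem_left _ _ (h b)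

/-- Laplace expansion along a column: if all the cofactor minors lie in an ideal, so does
the determinant. -/
lemma det_mem_of_col {R : Type*} [CommRing R] {k : ℕ}
    (M : Matrix (Fin (k + 1)) (Fin (k + 1)) R) (b : Fin (k + 1)) (J : Ideal R)
    (h : ∀ a : Fin (k + 1), (M.submatrix a.succAbove b.succAbove).det ∈ J) : M.det ∈ J := by
  rw [Matrix.det_succ_column M b]
  exact Ideal.sum_mem _ fun a _ => Ideal.mul_mem_left _ _ (h a)

lemma critIdeal_succ_le (m : V → V → ℕ) (i : ℕ) :
    critIdeal (P := P) m (i + 1) ≤ critIdeal (P := P) m i := by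
  rw [critIdeal, Ideal.span_le]
  rintro p ⟨r, s, hr, hs, rfl⟩
  refine det_mem_of_row _ 0 _ fun b => ?_
  rw [Matrix.submatrix_submatrix]
  exact gen_mem_critIdeal m _ _ (hr.comp (Fin.succAbove_right_injective))
    (hs.comp (Fin.succAbove_right_injective))

lemma critIdeal_antitone (m : V → V → ℕ) {i j : ℕ} (h : i ≤ j) :
    critIdeal (P := P) m j ≤ critIdeal (P := P) m i := by
  induction j with
  | zero => simp [Nat.le_zero.mp h]
  | succ j ih =>
    rcases Nat.lt_or_ge i (j + 1) with h' | h'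
    · exact (critIdeal_succ_le m j).trans (ih (Nat.lt_succ_iff.mp h'))
    · have : i = j + 1 := le_antisymm h h'
      subst this; exact le_refl _

end Helpers

section Delete

variable {P : Type} [CommRing P] {n : ℕ} (v : Fin (n + 1))

/-- The substitution `X v ↦ 0`, `X (v.succAbove u) ↦ X u`. -/
noncomputable def delVar (v : Fin (n + 1)) :
    MvPolynomial (Fin (n + 1)) P →+* MvPolynomial (Fin n) P :=
  (aeval (R := P) fun w => ((finSuccEquiv' v w).elim 0 X : MvPolynomial (Fin n) P)).toRingHom

lemma delVar_X_succAbove (u : Fin n) :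
    delVar (P := P) v (X (v.succAbove u)) = X u := by
  simp [delVar, finSuccEquiv'_succAbove]

variable (m : Fin (n + 1) → Fin (n + 1) → ℕ)

/-- A minor whose rows and columns avoid `v`, after the substitution, is a minor of `G ∖ v`. -/
lemma clean_minor {j : ℕ} (r s : Fin j → Fin (n + 1))
    (hr : Function.Injective r) (hs : Function.Injective s)
    (hrv : ∀ a, r a ≠ v) (hsv : ∀ b, s b ≠ v) :
    (((glap (P := P) m).submatrix r s).map (delVar (P := P) v)).det ∈
      critIdeal (P := P) (fun u w : Fin n => m (v.succAbove u) (v.succAbove w)) j := by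
  choose r' hr' using fun a => Fin.exists_succAbove_eq (hrv a)
  choose s' hs' using fun b => Fin.exists_succAbove_eq (hsv b)
  have hmat : ((glap (P := P) m).submatrix r s).map (delVar (P := P) v) =
      (glap (P := P) (fun u w : Fin n => m (v.succAbove u) (v.succAbove w))).submatrix r' s' := by
    ext a b
    simp only [Matrix.map_apply, Matrix.submatrix_apply, glap, Matrix.of_apply]
    rw [← hr' a, ← hs' b]
    simp only [Fin.succAbove_right_inj]
    split_ifs with h
    · rw [delVar_X_succAbove (P := P)]
    · rw [map_neg, map_natCast]
  rw [hmat]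
  refine gen_mem_critIdeal _ _ _ (fun a₁ a₂ h => hr ?_) (fun b₁ b₂ h => hs ?_)
  · rw [← hr' a₁, ← hr' a₂, h]
  · rw [← hs' b₁, ← hs' b₂, h]

/-- A minor whose rows avoid `v` (columns arbitrary), of size `k+1`, after the substitution
lies in the `k`-th critical ideal of `G ∖ v`. -/
lemma semiclean_minor {k : ℕ} (r s : Fin (k + 1) → Fin (n + 1))
    (hr : Function.Injective r) (hs : Function.Injective s)
    (hrv : ∀ a, r a ≠ v) :
    (((glap (P := P) m).submatrix r s).map (delVar (P := P) v)).det ∈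
      critIdeal (P := P) (fun u w : Fin n => m (v.succAbove u) (v.succAbove w)) k := by
  by_cases hv : ∀ b, s b ≠ v
  · exact critIdeal_antitone _ (Nat.le_succ k) (clean_minor v m r s hr hs hrv hv)
  · push_neg at hv
    obtain ⟨b₀, hb₀⟩ := hv
    refine det_mem_of_col _ b₀ _ fun a => ?_
    rw [Matrix.submatrix_map, Matrix.submatrix_submatrix]
    refine clean_minor v m _ _ (hr.comp Fin.succAbove_right_injective)
      (hs.comp Fin.succAbove_right_injective) (fun a' => hrv _) (fun b' => ?_)
    intro hcontra
    exact Fin.succAbove_ne b₀ b' (hs (hcontra.trans hb₀.symm))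

/-- The key lemma: any `(k+2)`-minor of `G`, after the substitution, lies in the `k`-th
critical ideal of `G ∖ v`. -/
lemma core_minor {k : ℕ} (r s : Fin (k + 2) → Fin (n + 1))
    (hr : Function.Injective r) (hs : Function.Injective s) :
    (((glap (P := P) m).submatrix r s).map (delVar (P := P) v)).det ∈
      critIdeal (P := P) (fun u w : Fin n => m (v.succAbove u) (v.succAbove w)) k := by
  by_cases hv : ∀ a, r a ≠ v
  · exact critIdeal_antitone _ (Nat.le_succ k) (semiclean_minor v m r s hr hs hv)
  · push_neg at hv
    obtain ⟨a₀, ha₀⟩ := hv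
    refine det_mem_of_row _ a₀ _ fun b => ?_
    rw [Matrix.submatrix_map, Matrix.submatrix_submatrix]
    refine semiclean_minor v m _ _ (hr.comp Fin.succAbove_right_injective)
      (hs.comp Fin.succAbove_right_injective) (fun a' => ?_)
    intro hcontra
    exact Fin.succAbove_ne a₀ a' (hr (hcontra.trans ha₀.symm))

end Delete

/-- Deleting a vertex from a digraph decreases `γ_P` by at most `2`:
`γ_P(G) - γ_P(G ∖ v) ≤ 2`. -/
theorem gammaP_deleteVertex (P : Type) [CommRing P] [Nontrivial P]
    (n : ℕ) (m : Fin (n + 1) → Fin (n + 1) → ℕ) (v : Fin (n + 1)) :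
    gammaP P m ≤ gammaP P (fun u w : Fin n => m (v.succAbove u) (v.succAbove w)) + 2 := by
  set m' : Fin n → Fin n → ℕ := fun u w => m (v.succAbove u) (v.succAbove w) with hm'
  have hbdd : BddAbove {i : ℕ | critIdeal (P := P) m' i = ⊤} := by
    refine ⟨n, fun k hk => ?_⟩
    by_contra hnk
    push_neg at hnk
    have hempty : {p : MvPolynomial (Fin n) P |
        ∃ r s : Fin k → Fin n, Function.Injective r ∧ Function.Injective s ∧
          p = ((glap (P := P) m').submatrix r s).det} = ∅ := by
      refine Set.eq_empty_iff_forall_notMem.mpr fun p hp => ?_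
      obtain ⟨r, _, hr, _, _⟩ := hp
      have := Fintype.card_le_of_injective r hr
      simp only [Fintype.card_fin] at this
      omega
    have hk' : critIdeal (P := P) m' k = ⊤ := hk
    rw [critIdeal, hempty, Ideal.span_empty] at hk'
    exact bot_ne_top hk'
  refine csSup_le' fun j hj => ?_
  have hj : critIdeal (P := P) m j = ⊤ := hj
  rcases le_or_gt j 2 with h2 | h2
  · exact h2.trans (Nat.le_add_left 2 _)
  · set i := j - 2 with hi
    have hji : j = i + 2 := by omega
    have htop : critIdeal (P := P) m' i = ⊤ := by
      rw [eq_top_iff]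
      have hmap : Ideal.map (delVar (P := P) v) (critIdeal (P := P) m (i + 2)) ≤
          critIdeal (P := P) m' i := by
        rw [critIdeal, Ideal.map_span, Ideal.span_le]
        rintro _ ⟨p, ⟨r, s, hr, hs, rfl⟩, rfl⟩
        rw [RingHom.map_det]
        exact core_minor v m r s hr hs
      calc (⊤ : Ideal (MvPolynomial (Fin n) P))
          = Ideal.map (delVar (P := P) v) (critIdeal (P := P) m (i + 2)) := by
            rw [← hji, hj, Ideal.map_top]
        _ ≤ critIdeal (P := P) m' i := hmap
    have : i ≤ gammaP P m' := le_csSup hbdd htop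
    omega
end

section
/- For the complete graph K_n with n ≥ 2 and 1 ≤ m ≤ n−1, the m-th critical ideal I_m(K_n,X) is generated by the set B_m = { ∏_{i∈I} (x_i + 1) : I ⊆ [n], |I| = m−1 } of all products of m−1 distinct factors (x_i+1). In particular I_1(K_n,X) = (1). -/
/-! A minor of `L(K_n, X)` with rows `r` and columns `s` is `D Q - J`, where `D` is diagonal with
entries `x_{r a} + 1`, `Q` is the `0/1` matrix of the coincidences `r a = s b` and `J` is the
all-ones matrix. Expanding the determinant multilinearly in the rows, every term keeping two rows
of `-J` vanishes, so each surviving term is a multiple of a product of `m - 1` factors `x_i + 1`.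
Conversely, rows `I ∪ {u}` and columns `I ∪ {v}`, with `u ≠ v` outside `I`, give the minor
`diag(0, x_i + 1) - J`, whose determinant is `-∏_{i ∈ I} (x_i + 1)`. -/

open MvPolynomial Matrix

/-- Arc multiplicities of the complete graph `K_n`. -/
def completeArcs (n : ℕ) : Fin n → Fin n → ℕ := fun u v => if u = v then 0 else 1

open Finset

namespace Matrix

variable {R : Type*} [CommRing R]

theorem det_diagonal_mul_sub_ones_mem_span {ι : Type*} [Fintype ι] [DecidableEq ι]
    (c : ι → R) (Q : ι → ι → R) :
    (diagonal c * of Q - of fun _ _ => 1).det ∈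
      Ideal.span ((fun T => ∏ a ∈ T, c a) '' {T : Finset ι | #T = Fintype.card ι - 1}) := by
  let ones : ι → ι → R := fun _ _ => -1
  have hrows : diagonal c * of Q - of (fun _ _ => 1) = of ((fun a => c a • Q a) + ones) := by
    ext a b; simp [ones, sub_eq_add_neg]
  have hexpand : (diagonal c * of Q - of fun _ _ => 1).det =
      ∑ S : Finset ι, (∏ a ∈ S, c a) * detRowAlternating (S.piecewise Q ones) := by
    rw [hrows]
    change detRowAlternating ((fun a => c a • Q a) + ones) = _
    rw [AlternatingMap.map_add_univ]
    refine sum_congr rfl fun S _ => ?_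
    have hfactor : S.piecewise (fun a => c a • Q a) ones =
        S.piecewise (fun a => c a • S.piecewise Q ones a) (S.piecewise Q ones) :=
      piecewise_congr S (fun a ha => by rw [piecewise_eq_of_mem _ _ _ ha]) fun a ha => by
        rw [piecewise_eq_of_notMem _ _ _ ha]
    rw [hfactor, ← AlternatingMap.coe_multilinearMap, MultilinearMap.map_piecewise_smul, smul_eq_mul]
  rw [hexpand]
  refine Ideal.sum_mem _ fun S _ => ?_
  by_cases hS : 1 < #Sᶜ
  · obtain ⟨j, hj, l, hl, hjl⟩ := one_lt_card.mp hS
    rw [mem_compl] at hj hl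
    rw [AlternatingMap.map_eq_zero_of_eq _ _ (by simp [hj, hl, ones]) hjl, mul_zero]
    exact Ideal.zero_mem _
  · obtain ⟨T, hTS, hT⟩ := exists_subset_card_eq (s := S) (n := Fintype.card ι - 1)
      (by have := card_add_card_compl S; omega)
    rw [← prod_sdiff hTS]
    exact Ideal.mul_mem_right _ _ (Ideal.mul_mem_left _ _ (Ideal.subset_span ⟨T, hT, rfl⟩))

theorem det_diagonal_cons_zero_sub_ones {k : ℕ} (d : Fin k → R) :
    (diagonal (Fin.cons 0 d) - of fun _ _ => 1 : Matrix (Fin (k + 1)) (Fin (k + 1)) R).det =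
      -∏ i, d i := by
  -- adding the first row `-1` to the others leaves an upper triangular matrix
  let B : Matrix (Fin (k + 1)) (Fin (k + 1)) R :=
    Fin.cons (fun _ => -1) fun i => Pi.single i.succ (d i)
  have hB : (diagonal (Fin.cons 0 d) - of fun _ _ => 1).det = B.det := by
    refine det_eq_of_forall_row_eq_smul_add_const (Fin.cons 0 fun _ => 1) 0 rfl fun i j => ?_
    cases i using Fin.cases <;> cases j using Fin.cases <;>
      simp [B, Pi.single_apply, diagonal_apply, eq_comm, sub_eq_add_neg]
  rw [hB, det_of_isUpperTriangular, Fin.prod_univ_succ]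
  · simp [B]
  · intro i j hji
    cases i using Fin.cases
    · exact absurd hji (Fin.not_lt_zero _)
    · simp only [B, Fin.cons_succ, Pi.single_apply]
      exact if_neg hji.ne

end Matrix

section CompleteGraph

variable {P : Type} [CommRing P] {n : ℕ}

theorem glap_completeArcs_apply (u v : Fin n) :
    glap (P := P) (completeArcs n) u v = (if u = v then X u + 1 else 0) - 1 := by
  by_cases h : u = v <;> simp [glap, completeArcs, h]

theorem det_submatrix_glap_completeArcs_mem_span {m : ℕ} (r s : Fin m → Fin n)
    (hr : Function.Injective r) :
    ((glap (P := P) (completeArcs n)).submatrix r s).det ∈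
      Ideal.span { p | ∃ I : Finset (Fin n), #I = m - 1 ∧ p = ∏ i ∈ I, (X i + 1) } := by
  have hminor : (glap (P := P) (completeArcs n)).submatrix r s =
      diagonal (fun a => X (r a) + 1) * of (fun a b => if r a = s b then 1 else 0) -
        of fun _ _ => 1 := by
    ext a b
    simp [glap_completeArcs_apply]
  rw [hminor]
  refine Ideal.span_mono ?_ (det_diagonal_mul_sub_ones_mem_span _ _)
  rintro _ ⟨T, hT, rfl⟩
  refine ⟨T.map ⟨r, hr⟩, by simpa using hT, (prod_map T ⟨r, hr⟩ fun i => X i + 1).symm⟩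

theorem prod_X_add_one_mem_critIdeal_completeArcs (I : Finset (Fin n)) (hI : #I + 2 ≤ n) :
    ∏ i ∈ I, (X i + 1) ∈ critIdeal (P := P) (completeArcs n) (#I + 1) := by
  obtain ⟨u, hu, v, hv, huv⟩ := one_lt_card.1 (show 1 < #Iᶜ by
    rw [card_compl, Fintype.card_fin]; omega)
  rw [mem_compl] at hu hv
  set e := I.orderEmbOfFin rfl
  have hu' : ∀ i, u ≠ e i := fun i h => hu (h ▸ I.orderEmbOfFin_mem rfl i)
  have hv' : ∀ i, v ≠ e i := fun i h => hv (h ▸ I.orderEmbOfFin_mem rfl i)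
  have hminor : (glap (P := P) (completeArcs n)).submatrix (Fin.cons u e) (Fin.cons v e) =
      diagonal (Fin.cons 0 fun i => X (e i) + 1) - of fun _ _ => 1 := by
    ext a b : 1
    cases a using Fin.cases <;> cases b using Fin.cases <;>
      simp [glap_completeArcs_apply, diagonal_apply, huv, hu', (hv' _).symm]
  have hdet : ((glap (P := P) (completeArcs n)).submatrix (Fin.cons u e) (Fin.cons v e)).det =
      -∏ i ∈ I, (X i + 1) := by
    rw [hminor, det_diagonal_cons_zero_sub_ones,
      ← prod_image (f := fun i => X i + 1) fun a _ b _ h => e.injective h,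
      image_orderEmbOfFin_univ]
  have hmem : -∏ i ∈ I, (X i + 1) ∈ critIdeal (P := P) (completeArcs n) (#I + 1) :=
    Ideal.subset_span ⟨Fin.cons u e, Fin.cons v e,
      Fin.cons_injective_iff.2 ⟨fun ⟨i, hi⟩ => hu' i hi.symm, e.injective⟩,
      Fin.cons_injective_iff.2 ⟨fun ⟨i, hi⟩ => hv' i hi.symm, e.injective⟩, hdet.symm⟩
  simpa using neg_mem hmem

theorem critIdeal_completeArcs_eq_span {m : ℕ} (hm : 1 ≤ m) (hmn : m + 1 ≤ n) :
    critIdeal (P := P) (completeArcs n) m =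
      Ideal.span { p | ∃ I : Finset (Fin n), #I = m - 1 ∧ p = ∏ i ∈ I, (X i + 1) } := by
  refine le_antisymm (Ideal.span_le.2 ?_) (Ideal.span_le.2 ?_)
  · rintro _ ⟨r, s, hr, -, rfl⟩
    exact det_submatrix_glap_completeArcs_mem_span r s hr
  · rintro _ ⟨I, hI, rfl⟩
    obtain rfl : m = #I + 1 := by omega
    exact prod_X_add_one_mem_critIdeal_completeArcs I (by omega)

end CompleteGraph

/-- For `K_n` with `n ≥ 2` and `1 ≤ m ≤ n − 1`, the `m`-th critical ideal is generated by all
products `∏_{i ∈ I} (x_i + 1)` over subsets `I ⊆ [n]` with `|I| = m − 1`.  In particular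
`I_1(K_n, X) = (1)`. -/
theorem critIdeal_complete (P : Type) [CommRing P] (n : ℕ) (hn : 2 ≤ n) :
    (∀ m : ℕ, 1 ≤ m → m ≤ n - 1 →
      critIdeal (P := P) (completeArcs n) m
        = Ideal.span { p | ∃ I : Finset (Fin n), I.card = m - 1 ∧ p = ∏ i ∈ I, (X i + 1) }) ∧
    critIdeal (P := P) (completeArcs n) 1 = ⊤ := by
  refine ⟨fun m hm hmn => critIdeal_completeArcs_eq_span hm (by omega), ?_⟩
  rw [critIdeal_completeArcs_eq_span le_rfl hn, Ideal.eq_top_iff_one]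
  exact Ideal.subset_span ⟨∅, rfl, prod_empty.symm⟩
end

section
/- If T is a tree (or forest), then det(L(T,X)) = Σ_{μ ∈ M(T)} (−1)^{|μ|} ∏_{v ∉ V(μ)} x_v, where M(T) is the set of all matchings of T (including the empty matching) and V(μ) is the set of vertices covered by μ. -/
/-!
Expand the determinant over permutations. The term of `σ` vanishes unless every vertex moved
by `σ` is sent to a neighbour. In a forest such a `σ` is an involution, since a longer cycle of
`σ` would trace a cycle of the graph, and these involutions correspond to the matchings `μ` via
their 2-cycles. The term of `σ` is then `sign σ · (-1)^{2|μ|} · ∏_{v ∉ V(μ)} x_v`, where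
`sign σ = (-1)^{|μ|}`.
-/

open MvPolynomial Matrix Finset Function

namespace Equiv.Perm

variable {V : Type*} [Fintype V] [DecidableEq V] {σ : Perm V} {e : Sym2 V} {v : V}

def movedEdges (σ : Perm V) : Finset (Sym2 V) :=
  σ.support.image fun v => s(v, σ v)

lemma mem_movedEdges : e ∈ σ.movedEdges ↔ ∃ v, σ v ≠ v ∧ s(v, σ v) = e := by
  simp [movedEdges]

lemma eq_of_mem_movedEdges (hσ : Involutive σ) (he : e ∈ σ.movedEdges) (hv : v ∈ e) :
    σ v ≠ v ∧ e = s(v, σ v) := by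
  obtain ⟨u, hu, rfl⟩ := mem_movedEdges.1 he
  rcases Sym2.mem_iff.1 hv with rfl | rfl
  · exact ⟨hu, rfl⟩
  · rw [hσ u]
    exact ⟨hu.symm, Sym2.eq_swap⟩

lemma forall_notMem_movedEdges_iff (hσ : Involutive σ) :
    (∀ e ∈ σ.movedEdges, v ∉ e) ↔ σ v = v := by
  refine ⟨fun h => ?_, fun hv e he hve => (eq_of_mem_movedEdges hσ he hve).1 hv⟩
  by_contra hv
  exact h _ (mem_movedEdges.2 ⟨v, hv, rfl⟩) (Sym2.mem_mk_left _ _)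

lemma card_support_eq_two_mul_card_movedEdges (hσ : Involutive σ) :
    #σ.support = 2 * #σ.movedEdges := by
  rw [card_eq_sum_card_image (fun v => s(v, σ v)) σ.support, ← movedEdges, mul_comm,
    ← smul_eq_mul, ← sum_const]
  refine sum_congr rfl fun e he => ?_
  obtain ⟨u, hu, rfl⟩ := mem_movedEdges.1 he
  have hfiber : {a ∈ σ.support | s(a, σ a) = s(u, σ u)} = {u, σ u} := by
    ext a
    have := hσ u
    simp only [mem_filter, mem_support, mem_insert, mem_singleton, Sym2.eq_iff]
    grind
  rw [hfiber, card_pair hu.symm]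

lemma sign_eq_neg_one_pow_card_movedEdges (hσ : Involutive σ) :
    sign σ = (-1) ^ #σ.movedEdges := by
  have hsq : σ ^ 2 = 1 := by
    ext v
    simp [sq, hσ v]
  rw [sign_of_pow_two_eq_one hsq, card_fixedPoints, sum_cycleType,
    Nat.sub_sub_self (card_le_univ _), card_support_eq_two_mul_card_movedEdges hσ,
    Nat.mul_div_cancel_left _ two_pos]

lemma movedEdges_injOn : Set.InjOn movedEdges {σ : Perm V | Involutive σ} := by
  intro σ hσ τ hτ h
  ext v
  by_cases hv : σ v = v
  · rw [hv, eq_comm, ← forall_notMem_movedEdges_iff hτ, ← h, forall_notMem_movedEdges_iff hσ]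
    exact hv
  · have he : s(v, σ v) ∈ τ.movedEdges := h ▸ mem_movedEdges.2 ⟨v, hv, rfl⟩
    exact Sym2.congr_right.1 (eq_of_mem_movedEdges hτ he (Sym2.mem_mk_left _ _)).2

end Equiv.Perm

namespace SimpleGraph

variable {V : Type*} {G : SimpleGraph V}

def IsEdgeMatching (G : SimpleGraph V) (μ : Finset (Sym2 V)) : Prop :=
  (∀ e ∈ μ, e ∈ G.edgeSet) ∧ ∀ e ∈ μ, ∀ f ∈ μ, e ≠ f → ∀ v : V, ¬(v ∈ e ∧ v ∈ f)

namespace IsEdgeMatching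

variable {μ : Finset (Sym2 V)} {v w : V}

open Classical in
noncomputable def partner (μ : Finset (Sym2 V)) (v : V) : V :=
  if h : ∃ w, s(v, w) ∈ μ then h.choose else v

lemma partner_eq (hμ : G.IsEdgeMatching μ) (h : s(v, w) ∈ μ) : partner μ v = w := by
  have hex : ∃ w, s(v, w) ∈ μ := ⟨w, h⟩
  rw [partner, dif_pos hex]
  by_contra hne
  exact hμ.2 _ hex.choose_spec _ h (mt Sym2.congr_right.1 hne) v
    ⟨Sym2.mem_mk_left _ _, Sym2.mem_mk_left _ _⟩

lemma mk_partner_mem (h : partner μ v ≠ v) : s(v, partner μ v) ∈ μ := by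
  unfold partner at *
  split_ifs at * with hex
  · exact hex.choose_spec
  · exact absurd rfl h

lemma partner_involutive (hμ : G.IsEdgeMatching μ) : Involutive (partner μ) := by
  intro v
  by_cases h : partner μ v = v
  · rw [h, h]
  · exact hμ.partner_eq (Sym2.eq_swap ▸ mk_partner_mem h)

lemma exists_perm_movedEdges_eq [Fintype V] [DecidableEq V] (hμ : G.IsEdgeMatching μ) :
    ∃ σ : Equiv.Perm V, (∀ v, σ v ≠ v → G.Adj v (σ v)) ∧ σ.movedEdges = μ := by
  refine ⟨hμ.partner_involutive.toPerm, fun v hv => hμ.1 _ (mk_partner_mem hv), ?_⟩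
  ext e
  refine ⟨fun he => ?_, fun he => ?_⟩
  · obtain ⟨v, hv, rfl⟩ := Equiv.Perm.mem_movedEdges.1 he
    exact mk_partner_mem hv
  · induction e using Sym2.ind with
    | _ a b =>
      have hab : a ≠ b := G.ne_of_adj (hμ.1 _ he)
      refine Equiv.Perm.mem_movedEdges.2 ⟨a, ?_, ?_⟩ <;>
        simp only [Involutive.coe_toPerm, hμ.partner_eq he, hab.symm, ne_eq, not_false_eq_true]

end IsEdgeMatching

lemma isEdgeMatching_movedEdges [Fintype V] [DecidableEq V] {σ : Equiv.Perm V}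
    (hσ : Involutive σ) (hadj : ∀ v, σ v ≠ v → G.Adj v (σ v)) :
    G.IsEdgeMatching σ.movedEdges := by
  refine ⟨fun e he => ?_, fun e he f hf hef v ⟨hve, hvf⟩ => hef ?_⟩
  · obtain ⟨v, hv, rfl⟩ := Equiv.Perm.mem_movedEdges.1 he
    exact hadj v hv
  · exact (Equiv.Perm.eq_of_mem_movedEdges hσ he hve).2.trans
      (Equiv.Perm.eq_of_mem_movedEdges hσ hf hvf).2.symm

/-- If `σ (σ v) ≠ v`, the `σ`-orbit of `v` is a closed walk through the edge `s(v, σ v)` which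
never uses that edge again, so this edge is not a bridge. -/
theorem IsAcyclic.involutive_of_forall_adj [Finite V] (hG : G.IsAcyclic) {σ : Equiv.Perm V}
    (hadj : ∀ v, σ v ≠ v → G.Adj v (σ v)) : Involutive σ := by
  intro v
  by_contra hv
  have hσv : σ v ≠ v := fun h => hv (by rw [h, h])
  set k := minimalPeriod σ v
  have hk : 0 < k := minimalPeriod_pos_of_mem_periodicPts (σ.injective.mem_periodicPts v)
  have hmin : ∀ i, 0 < i → i < k → σ^[i] v ≠ v := fun i hi hik h =>
    (IsPeriodicPt.minimalPeriod_le hi h).not_gt hik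
  set G' := G.deleteEdges {s(v, σ v)}
  have hstep : ∀ i, 0 < i → i < k → G'.Adj (σ^[i] v) (σ^[i + 1] v) := by
    intro i hi hik
    have hmoved : σ (σ^[i] v) ≠ σ^[i] v := fun h =>
      hσv ((σ.injective.iterate i) (by rw [← iterate_succ_apply, iterate_succ_apply', h]))
    rw [deleteEdges_adj, iterate_succ_apply', Set.mem_singleton_iff, Sym2.eq_iff]
    refine ⟨hadj _ hmoved, ?_⟩
    rintro (⟨h, -⟩ | ⟨h, h'⟩)
    · exact hmin i hi hik h
    · exact hv (h ▸ h')
  have hreach : ∀ i, i < k → G'.Reachable (σ v) (σ^[i + 1] v) := by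
    intro i
    induction i with
    | zero => exact fun _ => .rfl
    | succ i ih => exact fun hik => (ih (by omega)).trans (hstep _ (by omega) hik).reachable
  have hback := hreach (k - 1) (by omega)
  rw [Nat.sub_add_cancel hk, iterate_minimalPeriod] at hback
  exact isBridge_iff.1 (isAcyclic_iff_forall_adj_isBridge.1 hG (hadj v hσv)) hback.symm

section Determinant

variable {R : Type*} [Fintype V] [DecidableEq V] [CommRing R] [DecidableRel G.Adj]
  {σ : Equiv.Perm V}

lemma forall_adj_of_prod_diagonal_sub_adjMatrix_ne_zero (d : V → R)
    (h : ∏ i, (diagonal d - G.adjMatrix R) (σ i) i ≠ 0) : ∀ v, σ v ≠ v → G.Adj v (σ v) := by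
  intro v hv
  by_contra hna
  exact h (prod_eq_zero (mem_univ v) (by simp [hv, hna, adj_comm]))

lemma prod_diagonal_sub_adjMatrix_of_forall_adj (d : V → R)
    (hadj : ∀ v, σ v ≠ v → G.Adj v (σ v)) :
    ∏ i, (diagonal d - G.adjMatrix R) (σ i) i = (-1) ^ #σ.support * ∏ v ∈ σ.supportᶜ, d v := by
  rw [← prod_mul_prod_compl σ.support, ← prod_const]
  congr 1
  · refine prod_congr rfl fun v hv => ?_
    rw [Equiv.Perm.mem_support] at hv
    simp [hv, (hadj v hv).symm]
  · refine prod_congr rfl fun v hv => ?_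
    rw [mem_compl, Equiv.Perm.notMem_support] at hv
    simp [hv]

lemma sign_mul_prod_diagonal_sub_adjMatrix (d : V → R) (hσ : Involutive σ)
    (hadj : ∀ v, σ v ≠ v → G.Adj v (σ v)) :
    (Equiv.Perm.sign σ : R) * ∏ i, (diagonal d - G.adjMatrix R) (σ i) i =
      (-1) ^ #σ.movedEdges * ∏ v ∈ univ.filter (fun v => ∀ e ∈ σ.movedEdges, v ∉ e), d v := by
  have hfixed : univ.filter (fun v => ∀ e ∈ σ.movedEdges, v ∉ e) = σ.supportᶜ := by
    ext v
    simp [Equiv.Perm.forall_notMem_movedEdges_iff hσ]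
  rw [hfixed, prod_diagonal_sub_adjMatrix_of_forall_adj d hadj,
    Equiv.Perm.sign_eq_neg_one_pow_card_movedEdges hσ,
    Equiv.Perm.card_support_eq_two_mul_card_movedEdges hσ, pow_mul]
  simp

open Classical in
theorem IsAcyclic.det_diagonal_sub_adjMatrix (hG : G.IsAcyclic) (d : V → R) :
    (diagonal d - G.adjMatrix R).det = ∑ μ ∈ univ.filter G.IsEdgeMatching,
      (-1) ^ #μ * ∏ v ∈ univ.filter (fun v => ∀ e ∈ μ, v ∉ e), d v := by
  rw [det_apply', ← sum_filter_of_ne (p := fun σ => ∀ v, σ v ≠ v → G.Adj v (σ v))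
    fun σ _ h => forall_adj_of_prod_diagonal_sub_adjMatrix_ne_zero d (right_ne_zero_of_mul h)]
  have hinv : ∀ σ ∈ univ.filter (fun σ : Equiv.Perm V => ∀ v, σ v ≠ v → G.Adj v (σ v)),
      Involutive σ := fun σ hσ => hG.involutive_of_forall_adj (mem_filter.1 hσ).2
  refine sum_nbij Equiv.Perm.movedEdges (fun σ hσ => ?_) (fun σ hσ τ hτ => ?_)
    (fun μ hμ => ?_) (fun σ hσ => ?_)
  · exact mem_filter.2 ⟨mem_univ _, isEdgeMatching_movedEdges (hinv σ hσ) (mem_filter.1 hσ).2⟩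
  · exact Equiv.Perm.movedEdges_injOn (hinv σ hσ) (hinv τ hτ)
  · obtain ⟨σ, hadj, hσ⟩ := (mem_filter.1 hμ).2.exists_perm_movedEdges_eq
    exact ⟨σ, mem_filter.2 ⟨mem_univ _, hadj⟩, hσ⟩
  · convert sign_mul_prod_diagonal_sub_adjMatrix d (hinv σ hσ) (mem_filter.1 hσ).2

end Determinant

end SimpleGraph

open scoped Classical in
/-- If `T` is a forest (acyclic simple graph), then
`det L(T,X) = Σ_{μ matching of T} (−1)^{|μ|} ∏_{v ∉ V(μ)} x_v`, where the sum runs over all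
matchings of `T` (including the empty one) and `V(μ)` is the set of covered vertices. -/
theorem det_glap_forest_matchings (P : Type) [CommRing P] (n : ℕ)
    (G : SimpleGraph (Fin n)) (hG : G.IsAcyclic) :
    let L : Matrix (Fin n) (Fin n) (MvPolynomial (Fin n) P) :=
      Matrix.of fun u v => if u = v then X u
        else if G.Adj u v then (-1 : MvPolynomial (Fin n) P) else 0
    L.det = ∑ μ ∈ Finset.univ.filter (fun μ : Finset (Sym2 (Fin n)) =>
        (∀ e ∈ μ, e ∈ G.edgeSet) ∧
        ∀ e ∈ μ, ∀ f ∈ μ, e ≠ f → ∀ v : Fin n, ¬(v ∈ e ∧ v ∈ f)),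
      (-1 : MvPolynomial (Fin n) P) ^ μ.card
        * ∏ v ∈ Finset.univ.filter (fun v : Fin n => ∀ e ∈ μ, v ∉ e), X v := by
  intro L
  have hL : L = diagonal X - G.adjMatrix _ := by
    ext u v : 1
    simp only [L, of_apply, Matrix.sub_apply, diagonal_apply, SimpleGraph.adjMatrix_apply]
    split_ifs <;> simp_all
  rw [hL, hG.det_diagonal_sub_adjMatrix]
  rfl
end

section
/- For the path P_n on n vertices, the minor of the generalized Laplacian obtained by deleting row 1 and column n equals ±1; consequently γ_P(P_n) = n − 1, i.e., I_i(P_n,X) = (1) for all 1 ≤ i ≤ n−1 while I_n(P_n,X) ≠ (1). -/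
open MvPolynomial Matrix

/-- Arc multiplicities of the path on `k + 1` vertices `0, 1, …, k`. -/
def pathArcs (k : ℕ) : Fin (k + 1) → Fin (k + 1) → ℕ :=
  fun i j => if (i : ℕ) + 1 = j ∨ (j : ℕ) + 1 = i then 1 else 0


/-!
Deleting the first row and the last column of `L(P_n, X)` leaves an upper triangular matrix with
`-1` on the diagonal; its leading principal `i × i` blocks are again minors of `L(P_n, X)` of this
shape, so `I_i` contains a unit for every `i ≤ n - 1`. The only `n`-minors are `± det L(P_n, X)`,
and specialising every `X v` to one variable `t` turns `det L(P_n, X)` into a characteristic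
polynomial, which is monic of degree `n` and hence not a unit.
-/

theorem Matrix.det_dvd_det_submatrix_of_bijective {R ι V : Type*} [CommRing R]
    [Fintype ι] [DecidableEq ι] [Fintype V] [DecidableEq V] (A : Matrix V V R)
    {r s : ι → V} (hr : r.Bijective) (hs : s.Bijective) :
    A.det ∣ (A.submatrix r s).det := by
  set e := Equiv.ofBijective r hr
  set f := Equiv.ofBijective s hs
  have hsub : A.submatrix r s = (A.submatrix f f).submatrix (e.trans f.symm) id := by
    ext a b
    simp [e, f, Equiv.ofBijective_apply_symm_apply]
  rw [hsub, det_permute, det_submatrix_equiv_self]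
  exact dvd_mul_left _ _

section CriticalIdeals

variable {P : Type} [CommRing P] {V : Type} [Fintype V] [DecidableEq V] (m : V → V → ℕ)

theorem glap_apply_of_ne {u v : V} (h : u ≠ v) :
    glap (P := P) m u v = -(m u v : MvPolynomial V P) :=
  if_neg h

theorem critIdeal_eq_top_of_isUnit_det_submatrix {i : ℕ} {r s : Fin i → V}
    (hr : r.Injective) (hs : s.Injective) (hunit : IsUnit ((glap (P := P) m).submatrix r s).det) :
    critIdeal (P := P) m i = ⊤ :=
  Ideal.eq_top_of_isUnit_mem _ (Ideal.subset_span ⟨r, s, hr, hs, rfl⟩) hunit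

theorem critIdeal_card_le_span_det :
    critIdeal (P := P) m (Fintype.card V) ≤ Ideal.span {(glap (P := P) m).det} := by
  rw [critIdeal, Ideal.span_le]
  rintro _ ⟨r, s, hr, hs, rfl⟩
  exact Ideal.mem_span_singleton.mpr <| (glap m).det_dvd_det_submatrix_of_bijective
    ((Fintype.bijective_iff_injective_and_card r).mpr ⟨hr, Fintype.card_fin _⟩)
    ((Fintype.bijective_iff_injective_and_card s).mpr ⟨hs, Fintype.card_fin _⟩)

theorem eval₂_det_glap :
    eval₂Hom Polynomial.C (fun _ => Polynomial.X) (glap (P := P) m).det =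
      (Matrix.of fun u v => if u = v then 0 else (m u v : P)).charpoly := by
  rw [RingHom.map_det, charpoly]
  congr 1
  ext u v
  by_cases huv : u = v
  · subst huv
    simp [glap, charmatrix_apply_eq]
  · simp [glap, huv]

theorem not_isUnit_det_glap [Nontrivial P] [Nonempty V] : ¬ IsUnit (glap (P := P) m).det := by
  intro hunit
  have hcharpoly := hunit.map (eval₂Hom Polynomial.C (fun _ : V => Polynomial.X))
  rw [eval₂_det_glap, (charpoly_monic _).isUnit_iff] at hcharpoly
  have hdeg := charpoly_natDegree_eq_dim (Matrix.of fun u v => if u = v then 0 else (m u v : P))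
  rw [hcharpoly, Polynomial.natDegree_one] at hdeg
  exact Fintype.card_ne_zero hdeg.symm

theorem critIdeal_card_ne_top [Nontrivial P] [Nonempty V] :
    critIdeal (P := P) m (Fintype.card V) ≠ ⊤ := fun htop =>
  not_isUnit_det_glap m <| Ideal.span_singleton_eq_top.mp <|
    eq_top_iff.mpr (htop ▸ critIdeal_card_le_span_det m)

end CriticalIdeals

section Path

variable {P : Type} [CommRing P] {k : ℕ}

theorem glap_pathArcs_succ_castSucc_self (a : Fin k) :
    glap (P := P) (pathArcs k) a.succ a.castSucc = -1 := by
  rw [glap_apply_of_ne _ Fin.castSucc_lt_succ.ne', pathArcs, if_pos (Or.inr (by simp)),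
    Nat.cast_one]

theorem glap_pathArcs_succ_castSucc_of_lt {a b : Fin k} (hba : b < a) :
    glap (P := P) (pathArcs k) a.succ b.castSucc = 0 := by
  have hba : (b : ℕ) < a := hba
  rw [glap_apply_of_ne _ (Fin.castSucc_lt_succ_iff.mpr hba.le).ne', pathArcs,
    if_neg (by simp; omega), Nat.cast_zero, neg_zero]

theorem det_glap_pathArcs_submatrix_succ_castSucc {i : ℕ} {f : Fin i → Fin k}
    (hf : StrictMono f) :
    ((glap (P := P) (pathArcs k)).submatrix (Fin.succ ∘ f) (Fin.castSucc ∘ f)).det =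
      (-1) ^ i := by
  have hupper : ((glap (P := P) (pathArcs k)).submatrix (Fin.succ ∘ f)
      (Fin.castSucc ∘ f)).IsUpperTriangular := fun a b hba =>
    glap_pathArcs_succ_castSucc_of_lt (hf hba)
  rw [det_of_isUpperTriangular hupper]
  simp [glap_pathArcs_succ_castSucc_self]

end Path

/-- For the path `P_n` (`n = k + 1` vertices): the minor of `L(P_n,X)` obtained by deleting
the first row and the last column is `±1`; consequently `I_i(P_n,X) = (1)` for all
`1 ≤ i ≤ n − 1` while `I_n(P_n,X) ≠ (1)`, i.e. `γ_P(P_n) = n − 1`. -/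
theorem gammaP_path (P : Type) [CommRing P] [Nontrivial P] (k : ℕ) :
    (((glap (P := P) (pathArcs k)).submatrix Fin.succ Fin.castSucc).det = 1 ∨
      ((glap (P := P) (pathArcs k)).submatrix Fin.succ Fin.castSucc).det = -1) ∧
    (∀ i : ℕ, 1 ≤ i → i ≤ k → critIdeal (P := P) (pathArcs k) i = ⊤) ∧
    critIdeal (P := P) (pathArcs k) (k + 1) ≠ ⊤ := by
  refine ⟨?_, fun i _ hik => ?_, ?_⟩
  · have hminor : ((glap (P := P) (pathArcs k)).submatrix Fin.succ Fin.castSucc).det =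
        (-1) ^ k :=
      det_glap_pathArcs_submatrix_succ_castSucc strictMono_id
    rw [hminor]
    exact neg_one_pow_eq_or _ k
  · have hf := Fin.strictMono_castLE hik
    refine critIdeal_eq_top_of_isUnit_det_submatrix _ ((Fin.succ_injective _).comp hf.injective)
      ((Fin.castSucc_injective _).comp hf.injective) ?_
    rw [det_glap_pathArcs_submatrix_succ_castSucc hf]
    exact isUnit_neg_one.pow i
  · simpa using critIdeal_card_ne_top (P := P) (pathArcs k)
end

section
/- Define polynomials p_{i,s} for the cycle C_n by p_{i,1} = 1, p_{i,s} = det(L(P_i^{s-1},X)) for s ≥ 2 (the generalized-Laplacian determinant of the induced path on vertices v_i,…,v_{i+s−2}, indices mod n), extended by p_{i,s} = −p_{i+s,−s} for s ≤ 0, and let q_{i,j} (i ≤ j) be ± the minor of L(C_n,X) obtained by deleting row i and column j, normalized to have leading coefficient 1. Then q_{i,j} = p_{i+1,j−i} + p_{j+1,n−j+i}; moreover for 2 ≤ j ≤ n−1 and −j ≤ s ≤ n−j the recurrence q_{i,i+j+s} = p_{i+j,s+1}·q_{i,i+j} − p_{i+j+1,s}·q_{i,i+j−1} holds. -/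
open MvPolynomial Matrix
open Fin.CommRing

/-- Determinant of the generalized Laplacian of the induced path on `t` consecutive vertices
`v_i, v_{i+1}, …, v_{i+t-1}` of the cycle `C_n` (indices mod `n`). -/
noncomputable def cpathDet (P : Type) [CommRing P] (n : ℕ) [NeZero n] (i : Fin n) (t : ℕ) :
    MvPolynomial (Fin n) P :=
  (Matrix.of fun a b : Fin t =>
    if a = b then X (i + ((a : ℕ) : Fin n))
    else if (a : ℕ) + 1 = b ∨ (b : ℕ) + 1 = a then (-1 : MvPolynomial (Fin n) P) else 0).det

/-- `p_{i,s}` for `s ∈ ℕ`: `p_{i,0} = 0`, `p_{i,1} = 1`, and for `s ≥ 2` the determinant of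
the generalized Laplacian of the path on the `s - 1` vertices `v_i, …, v_{i+s-2}`. -/
noncomputable def pN (P : Type) [CommRing P] (n : ℕ) [NeZero n] (i : Fin n) (s : ℕ) :
    MvPolynomial (Fin n) P :=
  if s = 0 then 0 else cpathDet P n i (s - 1)

/-- `p_{i,s}` extended to `s ∈ ℤ` by the convention `p_{i,s} = -p_{i+s,-s}` for `s ≤ 0`. -/
noncomputable def pZ (P : Type) [CommRing P] (n : ℕ) [NeZero n] (i : Fin n) (s : ℤ) :
    MvPolynomial (Fin n) P :=
  if 0 ≤ s then pN P n i s.toNat else - pN P n (i + (s : Fin n)) (-s).toNat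

/-- `q_{a,b} = p_{a+1,b-a} + p_{b+1,n-b+a}` (indices mod `n`): the normalized
`(n-1)`-minor of `L(C_n,X)` obtained by deleting row `a` and column `b`. -/
noncomputable def qq (P : Type) [CommRing P] (n : ℕ) [NeZero n] (a b : Fin n) :
    MvPolynomial (Fin n) P :=
  pN P n (a + 1) ((b - a) : Fin n).val + pN P n (b + 1) (n - ((b - a) : Fin n).val)

/-- The generalized Laplacian of the cycle `C_n`. -/
noncomputable def LCn (P : Type) [CommRing P] (n : ℕ) [NeZero n] :
    Matrix (Fin n) (Fin n) (MvPolynomial (Fin n) P) :=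
  Matrix.of fun u v => if u = v then X u
    else if v = u + 1 ∨ u = v + 1 then (-1 : MvPolynomial (Fin n) P) else 0

/-- The minor of `L(C_n,X)` obtained by deleting row `a` and column `b` (rows and columns
listed in increasing order). -/
noncomputable def cminor (P : Type) [CommRing P] (n : ℕ) [NeZero n] (a b : Fin n) :
    MvPolynomial (Fin n) P :=
  ((LCn P n).submatrix
    (⇑((Finset.univ.erase a).orderEmbOfFin (k := n - 1) (by simp)))
    (⇑((Finset.univ.erase b).orderEmbOfFin (k := n - 1) (by simp)))).det

/-!
Deleting row `a` and column `b` of `L(C_n, X)` leaves the path matrix of `v_{a+1}, …, v_{a-1}`,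
except that one column is the column of `v_a`, whose only nonzero entries are the `-1`s in the rows
of the two neighbours of `v_a`. Expanding along that column writes the minor as the sum of two
corner cofactors of a path matrix; each of them is a triangular block with `-1` on the diagonal
times the determinant of one of the two paths left after deleting `v_a` and `v_b` from the cycle.

For the recurrence, both sides, as functions of `s`, satisfy the three-term recurrence
`F (s + 1) = x_{i+j+s} F s - F (s - 1)` of the path determinants, and they agree at `s = -1`
and `s = 0`. For the left side this holds because `q_{i,b}` is the sum of the determinants of
the path ending at `v_{b-1}` and the path starting at `v_{b+1}`, so it obeys the recurrence in `b`
as long as `b ≠ i`.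
-/

theorem Function.Injective.exists_perm_comp_eq {α β : Type*} {f f' : α → β}
    (hf : Function.Injective f) (hf' : Function.Injective f') (h : Set.range f' = Set.range f) :
    ∃ σ : Equiv.Perm α, f ∘ σ = f' :=
  ⟨(Equiv.ofInjective f' hf').trans ((Equiv.setCongr h).trans (Equiv.ofInjective f hf).symm),
    funext fun x => by simp [Equiv.apply_ofInjective_symm]⟩

namespace Matrix

variable {R : Type*} [CommRing R]

theorem det_succ_column_of_forall_ne_eq_zero {t : ℕ} (A : Matrix (Fin (t + 1)) (Fin (t + 1)) R)
    {r j : Fin (t + 1)} (h : ∀ i, i ≠ r → A i j = 0) :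
    A.det = (-1) ^ ((r : ℕ) + j) * A r j * (A.submatrix r.succAbove j.succAbove).det := by
  rw [det_succ_column A j, Finset.sum_eq_single r (fun i _ hi => by simp [h i hi]) (by simp)]

theorem det_submatrix_eq_or_eq_neg_of_range_eq {m k : Type*} [Fintype m] [DecidableEq m]
    (M : Matrix k k R) {f f' g g' : m → k} (hf : Function.Injective f)
    (hf' : Function.Injective f') (hg : Function.Injective g) (hg' : Function.Injective g')
    (hrf : Set.range f' = Set.range f) (hrg : Set.range g' = Set.range g) :
    (M.submatrix f' g').det = (M.submatrix f g).det
      ∨ (M.submatrix f' g').det = -(M.submatrix f g).det := by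
  obtain ⟨σ, rfl⟩ := hf.exists_perm_comp_eq hf' hrf
  obtain ⟨τ, rfl⟩ := hg.exists_perm_comp_eq hg' hrg
  have hdet : (M.submatrix (f ∘ σ) (g ∘ τ)).det
      = (Equiv.Perm.sign τ * Equiv.Perm.sign σ : ℤ) * (M.submatrix f g).det := by
    rw [← submatrix_submatrix, show ((M.submatrix f g).submatrix σ τ)
      = ((M.submatrix f g).submatrix σ id).submatrix id τ from rfl, det_permute', det_permute]
    push_cast; ring
  rcases Int.units_eq_one_or (Equiv.Perm.sign σ) with hσ | hσ <;>
    rcases Int.units_eq_one_or (Equiv.Perm.sign τ) with hτ | hτ <;>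
    simp [hdet, hσ, hτ]

end Matrix

theorem eqOn_Icc_of_three_term_recurrence {R : Type*} [Ring R] (c : ℤ → R) {f g : ℤ → R}
    {lo hi a : ℤ} (hf : ∀ s, lo < s → s < hi → f (s + 1) = c s * f s - f (s - 1))
    (hg : ∀ s, lo < s → s < hi → g (s + 1) = c s * g s - g (s - 1))
    (hlo : lo ≤ a) (hhi : a + 1 ≤ hi) (h₀ : f a = g a) (h₁ : f (a + 1) = g (a + 1)) :
    Set.EqOn f g (Set.Icc lo hi) := by
  have up : ∀ s, a ≤ s → s + 1 ≤ hi → f s = g s ∧ f (s + 1) = g (s + 1) := by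
    intro s hs
    induction s, hs using Int.leInduction with
    | base => exact fun _ => ⟨h₀, h₁⟩
    | succ s hs ih =>
      intro h
      obtain ⟨e₀, e₁⟩ := ih (by omega)
      refine ⟨e₁, ?_⟩
      rw [hf _ (by omega) (by omega), hg _ (by omega) (by omega), add_sub_cancel_right, e₀, e₁]
  have down : ∀ s, s ≤ a → lo ≤ s → f s = g s ∧ f (s + 1) = g (s + 1) := by
    intro s hs
    induction s, hs using Int.leInductionDown with
    | base => exact fun _ => ⟨h₀, h₁⟩
    | pred s hs ih =>
      intro h
      obtain ⟨e₀, e₁⟩ := ih (by omega)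
      rw [sub_add_cancel]
      refine ⟨?_, e₀⟩
      have hf' := hf s (by omega) (by omega)
      have hg' := hg s (by omega) (by omega)
      rw [e₀, e₁] at hf'
      rw [eq_sub_iff_add_eq, ← eq_sub_iff_add_eq'] at hf' hg'
      rw [hf', hg']
  rintro s ⟨hs₁, hs₂⟩
  rcases lt_or_ge s a with hs | hs
  · exact (down s hs.le hs₁).1
  rcases lt_or_eq_of_le hs₂ with hs₂ | rfl
  · exact (up s hs (by omega)).1
  · simpa using (up (s - 1) (by omega) (by omega)).2

section PathMatrix

variable (P : Type) [CommRing P] (n : ℕ) [NeZero n]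

noncomputable def pathMatrix (i : Fin n) (t : ℕ) :
    Matrix (Fin t) (Fin t) (MvPolynomial (Fin n) P) :=
  Matrix.of fun a b : Fin t =>
    if a = b then X (i + ((a : ℕ) : Fin n))
    else if (a : ℕ) + 1 = b ∨ (b : ℕ) + 1 = a then -1 else 0

variable {P n}

theorem cpathDet_eq_det (i : Fin n) (t : ℕ) : cpathDet P n i t = (pathMatrix P n i t).det := rfl

theorem pathMatrix_submatrix_castSucc (i : Fin n) (t : ℕ) :
    (pathMatrix P n i (t + 1)).submatrix Fin.castSucc Fin.castSucc = pathMatrix P n i t := by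
  ext a b
  simp [pathMatrix]

theorem pathMatrix_submatrix_succ (i : Fin n) (t : ℕ) :
    (pathMatrix P n i (t + 1)).submatrix Fin.succ Fin.succ = pathMatrix P n (i + 1) t := by
  ext a b
  simp [pathMatrix, add_assoc, add_comm (1 : Fin n)]

theorem det_pathMatrix_submatrix_succ_succAbove (i : Fin n) (t : ℕ) (c : Fin (t + 1)) :
    ((pathMatrix P n i (t + 1)).submatrix Fin.succ c.succAbove).det
      = (-1) ^ (c : ℕ) * cpathDet P n (i + (c : ℕ) + 1) (t - c) := by
  induction t generalizing i with
  | zero =>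
    rw [Fin.fin_one_eq_zero c, Fin.succAbove_zero, pathMatrix_submatrix_succ]
    simp [cpathDet_eq_det]
  | succ t ih =>
    induction c using Fin.cases with
    | zero => simp [pathMatrix_submatrix_succ, cpathDet_eq_det]
    | succ c =>
      set M := (pathMatrix P n i (t + 2)).submatrix Fin.succ c.succ.succAbove
      have hcol : ∀ r, r ≠ 0 → M r 0 = 0 := by
        intro r hr
        have : (r : ℕ) ≠ 0 := Fin.val_ne_iff.mpr hr
        simp only [M, Matrix.submatrix_apply, Fin.succ_succAbove_zero, pathMatrix, Matrix.of_apply]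
        simp [Fin.succ_ne_zero, this]
      have hminor : M.submatrix (Fin.succAbove 0) (Fin.succAbove 0)
          = (pathMatrix P n (i + 1) (t + 1)).submatrix Fin.succ c.succAbove := by
        ext a b
        simp [M, Fin.succ_succAbove_succ, ← pathMatrix_submatrix_succ]
      rw [M.det_succ_column_of_forall_ne_eq_zero hcol, hminor, ih]
      simp [M, pathMatrix, pow_succ, add_assoc, add_left_comm (1 : Fin n)]

theorem det_pathMatrix_submatrix_castSucc_succAbove (i : Fin n) (t : ℕ) (c : Fin (t + 1)) :
    ((pathMatrix P n i (t + 1)).submatrix Fin.castSucc c.succAbove).det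
      = (-1) ^ (t - c) * cpathDet P n i c := by
  induction t with
  | zero =>
    rw [Fin.fin_one_eq_zero c, ← Fin.last_zero, Fin.succAbove_last, pathMatrix_submatrix_castSucc]
    simp [cpathDet_eq_det]
  | succ t ih =>
    induction c using Fin.lastCases with
    | last => simp [pathMatrix_submatrix_castSucc, cpathDet_eq_det]
    | cast c =>
      set M := (pathMatrix P n i (t + 2)).submatrix Fin.castSucc c.castSucc.succAbove
      have hc : c.castSucc.succAbove (Fin.last t) = Fin.last (t + 1) := by
        rw [Fin.succAbove_of_le_castSucc _ _ (Fin.castSucc_le_castSucc_iff.mpr c.le_last),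
          Fin.succ_last]
      have hcol : ∀ r, r ≠ Fin.last t → M r (Fin.last t) = 0 := by
        intro r hr
        have : (r : ℕ) ≠ t := Fin.val_ne_iff.mpr hr
        simp only [M, Matrix.submatrix_apply, hc, pathMatrix, Matrix.of_apply]
        simp only [Fin.ext_iff, Fin.val_castSucc, Fin.val_last]
        rw [if_neg (by omega), if_neg (by omega)]
      have hminor : M.submatrix (Fin.last t).succAbove (Fin.last t).succAbove
          = (pathMatrix P n i (t + 1)).submatrix Fin.castSucc c.succAbove := by
        rw [← pathMatrix_submatrix_castSucc i (t + 1)]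
        ext a b
        simp [M, Fin.castSucc_succAbove_castSucc]
      have hlast : M (Fin.last t) (Fin.last t) = -1 := by
        simp [M, hc, pathMatrix, Fin.ext_iff]
      rw [M.det_succ_column_of_forall_ne_eq_zero hcol, hminor, ih, hlast, Fin.val_castSucc,
        show t + 1 - c = t - c + 1 by omega, ← two_mul, pow_mul]
      simp [pow_succ]

theorem cpathDet_zero (i : Fin n) : cpathDet P n i 0 = 1 :=
  Matrix.det_isEmpty

theorem cpathDet_one (i : Fin n) : cpathDet P n i 1 = X i := by
  simp [cpathDet_eq_det, pathMatrix]

theorem cpathDet_add_two (i : Fin n) (t : ℕ) :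
    cpathDet P n i (t + 2)
      = X (i + ((t + 1 : ℕ) : Fin n)) * cpathDet P n i (t + 1) - cpathDet P n i t := by
  have hne : Fin.last (t + 1) ≠ (Fin.last t).castSucc := (Fin.castSucc_lt_last _).ne'
  rw [cpathDet_eq_det, Matrix.det_succ_row _ (Fin.last (t + 1)),
    Fintype.sum_eq_add _ _ hne ?_]
  · simp only [Fin.succAbove_last, det_pathMatrix_submatrix_castSucc_succAbove,
      pathMatrix_submatrix_castSucc, ← cpathDet_eq_det]
    simp [pathMatrix, Fin.ext_iff, pow_succ]
    ring
  · rintro j ⟨h₁, h₂⟩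
    have : (j : ℕ) ≠ t + 1 := Fin.val_ne_iff.mpr h₁
    have : (j : ℕ) ≠ t := fun h => h₂ (Fin.ext h)
    have hj : pathMatrix P n i (t + 2) (Fin.last (t + 1)) j = 0 := by
      simp only [pathMatrix, Matrix.of_apply, if_neg h₁.symm, Fin.val_last]
      rw [if_neg (by omega)]
    simp [hj]

theorem cpathDet_add_two' (i : Fin n) (t : ℕ) :
    cpathDet P n i (t + 2) = X i * cpathDet P n (i + 1) (t + 1) - cpathDet P n (i + 1 + 1) t := by
  rw [cpathDet_eq_det, Matrix.det_succ_row_zero, Fintype.sum_eq_add 0 1 (by simp) ?_]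
  · simp only [Fin.succAbove_zero, det_pathMatrix_submatrix_succ_succAbove,
      pathMatrix_submatrix_succ, ← cpathDet_eq_det]
    simp [pathMatrix, Fin.ext_iff]
    ring
  · rintro j ⟨h₁, h₂⟩
    have : (j : ℕ) ≠ 0 := Fin.val_ne_iff.mpr h₁
    have : (j : ℕ) ≠ 1 := fun h => h₂ (Fin.ext h)
    have hj : pathMatrix P n i (t + 2) 0 j = 0 := by
      simp only [pathMatrix, Matrix.of_apply, if_neg h₁.symm]
      exact if_neg (by simp only [Fin.val_zero]; omega)
    simp [hj]

end PathMatrix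

section Recurrences

variable {P : Type} [CommRing P] {n : ℕ} [NeZero n]

theorem pN_zero (i : Fin n) : pN P n i 0 = 0 := rfl

theorem pN_succ (i : Fin n) (s : ℕ) : pN P n i (s + 1) = cpathDet P n i s := rfl

theorem pN_add_two (i : Fin n) (s : ℕ) :
    pN P n i (s + 2) = X (i + (s : Fin n)) * pN P n i (s + 1) - pN P n i s := by
  cases s with
  | zero => simp [pN_succ, pN_zero, cpathDet_zero, cpathDet_one]
  | succ s => rw [pN_succ, pN_succ, pN_succ, cpathDet_add_two]

theorem pN_add_two' (i : Fin n) (s : ℕ) :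
    pN P n i (s + 2) = X i * pN P n (i + 1) (s + 1) - pN P n (i + 1 + 1) s := by
  cases s with
  | zero => simp [pN_succ, pN_zero, cpathDet_zero, cpathDet_one]
  | succ s => rw [pN_succ, pN_succ, pN_succ, cpathDet_add_two']

theorem pZ_natCast (i : Fin n) (s : ℕ) : pZ P n i s = pN P n i s := by
  simp [pZ]

theorem pZ_neg_natCast (i : Fin n) (s : ℕ) : pZ P n i (-s) = -pN P n (i - s) s := by
  rcases s with _ | s
  · simp [pZ, pN_zero]
  · rw [pZ, if_neg (by omega)]
    simp [sub_eq_add_neg]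

theorem pZ_zero (i : Fin n) : pZ P n i 0 = 0 := pZ_natCast i 0

theorem pZ_one (i : Fin n) : pZ P n i 1 = 1 := by
  simpa [pN_succ, cpathDet_zero] using pZ_natCast (P := P) i 1

theorem pZ_neg_one (i : Fin n) : pZ P n i (-1) = -1 := by
  simpa [pN_succ, cpathDet_zero] using pZ_neg_natCast (P := P) i 1

theorem pZ_add_two (i : Fin n) (s : ℤ) :
    pZ P n i (s + 2) = X (i + (s : Fin n)) * pZ P n i (s + 1) - pZ P n i s := by
  rcases le_or_gt 0 s with hs | hs
  · lift s to ℕ using hs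
    have := pN_add_two (P := P) i s
    simp only [← pZ_natCast, Nat.cast_add] at this
    simpa using this
  obtain ⟨k, rfl⟩ : ∃ k : ℕ, s = -(k + 1 : ℕ) := ⟨(-s - 1).toNat, by omega⟩
  rcases k with _ | k
  · simp [pZ_zero, pZ_one, pZ_neg_one]
  · rw [show -((k + 1 + 1 : ℕ) : ℤ) + 2 = -(k : ℤ) by push_cast; ring,
      show -((k + 1 + 1 : ℕ) : ℤ) + 1 = -((k + 1 : ℕ) : ℤ) by push_cast; ring,
      pZ_neg_natCast, pZ_neg_natCast, pZ_neg_natCast]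
    set c := i - ((k + 1 + 1 : ℕ) : Fin n)
    rw [show i + ((-((k + 1 + 1 : ℕ) : ℤ) : ℤ) : Fin n) = c by simp [c, sub_eq_add_neg],
      show i - ((k + 1 : ℕ) : Fin n) = c + 1 by simp [c]; ring,
      show i - (k : Fin n) = c + 1 + 1 by simp [c]; ring]
    linear_combination -(pN_add_two' (P := P) c k)

theorem qq_add_natCast (a : Fin n) (k : ℕ) (hk : k ≤ n) :
    qq P n a (a + k) = pN P n (a + 1) k + pN P n (a + k + 1) (n - k) := by
  rw [qq, add_sub_cancel_left]
  rcases hk.lt_or_eq with hk | rfl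
  · rw [Fin.val_cast_of_lt hk]
  · simp [pN_zero]

theorem qq_add_one (a b : Fin n) (hb : b ≠ a) :
    qq P n a (b + 1) = X b * qq P n a b - qq P n a (b - 1) := by
  obtain ⟨m, hm⟩ : ∃ m, (b - a).val = m + 1 :=
    Nat.exists_eq_succ_of_ne_zero (by simpa [Fin.ext_iff, sub_eq_zero] using hb)
  have hmn : m + 2 ≤ n := by have := (b - a).isLt; omega
  have hb' : b = a + ((m + 1 : ℕ) : Fin n) := by rw [← hm, Fin.cast_val_eq_self]; ring
  obtain ⟨r, hr⟩ : ∃ r, n = m + 2 + r := ⟨n - (m + 2), by omega⟩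
  have q₀ : qq P n a (b - 1) = pN P n (a + 1) m + pN P n b (r + 2) := by
    rw [show b - 1 = a + (m : Fin n) by rw [hb']; push_cast; ring, qq_add_natCast _ _ (by omega),
      show n - m = r + 2 by omega, hb']
    congr 2
    push_cast; ring
  have q₁ : qq P n a b = pN P n (a + 1) (m + 1) + pN P n (b + 1) (r + 1) := by
    rw [hb', qq_add_natCast _ _ (by omega), show n - (m + 1) = r + 1 by omega]
  have q₂ : qq P n a (b + 1) = pN P n (a + 1) (m + 2) + pN P n (b + 1 + 1) r := by
    rw [show b + 1 = a + ((m + 2 : ℕ) : Fin n) by rw [hb']; push_cast; ring,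
      qq_add_natCast _ _ hmn, show n - (m + 2) = r by omega]
  have p₁ := pN_add_two (P := P) (a + 1) m
  rw [show a + 1 + (m : Fin n) = b by rw [hb']; push_cast; ring] at p₁
  rw [q₀, q₁, q₂]
  linear_combination p₁ + pN_add_two' (P := P) b r

theorem qq_three_term_recurrence (i : Fin n) (j : ℕ) (hj : 1 ≤ j) (hjn : j ≤ n) (s : ℤ)
    (hs₁ : -(j : ℤ) ≤ s) (hs₂ : s ≤ (n : ℤ) - j) :
    qq P n i (i + (j : Fin n) + (s : Fin n))
      = pZ P n (i + (j : Fin n)) (s + 1) * qq P n i (i + (j : Fin n))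
        - pZ P n (i + (j : Fin n) + 1) s * qq P n i (i + (j : Fin n) - 1) := by
  set b := i + (j : Fin n)
  refine eqOn_Icc_of_three_term_recurrence (fun s => X (b + (s : Fin n)))
    (f := fun s => qq P n i (b + (s : Fin n)))
    (g := fun s => pZ P n b (s + 1) * qq P n i b - pZ P n (b + 1) s * qq P n i (b - 1))
    ?_ ?_ (a := -1) (by omega) (by omega) ?_ ?_ ⟨hs₁, hs₂⟩
  · intro s hs₁ hs₂
    have hne : b + (s : Fin n) ≠ i := by
      obtain ⟨k, hk⟩ : ∃ k : ℕ, (j : ℤ) + s = k := ⟨(j + s).toNat, by omega⟩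
      have hk' : (j : Fin n) + (s : Fin n) = (k : Fin n) := by
        simpa using congrArg (Int.cast : ℤ → Fin n) hk
      rw [add_assoc, hk', Ne, add_eq_left, Fin.natCast_eq_zero]
      exact fun h => absurd (Nat.le_of_dvd (by omega) h) (by omega)
    simp only [Int.cast_add, Int.cast_sub, Int.cast_one, ← add_assoc]
    rw [qq_add_one _ _ hne, add_sub_assoc]
  · intro s _ _
    have h₁ := pZ_add_two (P := P) b s
    have h₂ := pZ_add_two (P := P) (b + 1) (s - 1)
    rw [show b + 1 + ((s - 1 : ℤ) : Fin n) = b + (s : Fin n) by push_cast; ring,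
      show s - 1 + 2 = s + 1 by ring, show s - 1 + 1 = s by ring] at h₂
    rw [show s + 1 + 1 = s + 2 by ring, sub_add_cancel, h₁, h₂]
    ring
  · simp [pZ_zero, pZ_neg_one, sub_eq_add_neg]
  · simp [pZ_zero, pZ_one]

end Recurrences

section CycleMinor

variable {P : Type} [CommRing P] {n : ℕ} [NeZero n]

theorem det_updateCol_pathMatrix_single_add_single (i : Fin n) (t : ℕ) (c : Fin (t + 2)) :
    ((pathMatrix P n i (t + 2)).updateCol c (Pi.single 0 1 + Pi.single (Fin.last (t + 1)) 1)).det
      = cpathDet P n i c + cpathDet P n (i + (c : ℕ) + 1) (t + 1 - c) := by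
  have cofactor : ∀ r, ((pathMatrix P n i (t + 2)).updateCol c (Pi.single r 1)).det
      = (-1) ^ ((r : ℕ) + c)
        * ((pathMatrix P n i (t + 2)).submatrix r.succAbove c.succAbove).det := by
    intro r
    rw [Matrix.det_succ_column_of_forall_ne_eq_zero _ (r := r) (j := c)
      (fun k hk => by simp [hk]), Matrix.submatrix_updateCol_succAbove]
    simp
  rw [Matrix.det_updateCol_add, cofactor, cofactor, Fin.succAbove_zero, Fin.succAbove_last,
    det_pathMatrix_submatrix_succ_succAbove, det_pathMatrix_submatrix_castSucc_succAbove,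
    ← mul_assoc, ← mul_assoc, ← pow_add, ← pow_add, Fin.val_zero, Fin.val_last,
    show 0 + (c : ℕ) + c = 2 * c by ring,
    show t + 1 + c + (t + 1 - c) = 2 * (t + 1) by omega]
  simp [pow_mul, add_comm]

theorem LCn_submatrix_add_castSucc (m : ℕ) (a : Fin (m + 1)) :
    (LCn P (m + 1)).submatrix (fun k : Fin m => a + 1 + k.castSucc) (fun k => a + 1 + k.castSucc)
      = pathMatrix P (m + 1) (a + 1) m := by
  refine Matrix.ext fun x y => ?_
  simp only [LCn, pathMatrix, Matrix.submatrix_apply, Matrix.of_apply, add_assoc, add_right_inj,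
    Fin.castSucc_inj, Fin.coeSucc_eq_succ, Fin.coe_eq_castSucc]
  congr 2
  apply propext
  simp only [Fin.ext_iff, Fin.val_castSucc, Fin.val_succ]
  omega

theorem LCn_add_castSucc_apply (m : ℕ) (a : Fin (m + 3)) (k : Fin (m + 2)) :
    LCn P (m + 3) (a + 1 + k.castSucc) a
      = -(Pi.single 0 1 + Pi.single (Fin.last (m + 1)) 1 : Fin (m + 2) → MvPolynomial _ P) k := by
  have hk : a + 1 + k.castSucc = a + k.succ := by
    rw [add_assoc, add_comm 1, Fin.coeSucc_eq_succ]
  have h₀ : a + k.succ ≠ a := by simp [Fin.succ_ne_zero]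
  have h₁ : a = a + k.succ + 1 ↔ k = Fin.last (m + 1) := by
    rw [add_assoc, left_eq_add, ← Fin.last_add_one, add_left_inj, ← Fin.succ_last, Fin.succ_inj]
  have h₂ : a + k.succ = a + 1 ↔ k = 0 := by
    rw [add_right_inj, ← Fin.succ_zero_eq_one, Fin.succ_inj]
  have hne : (0 : Fin (m + 2)) ≠ Fin.last (m + 1) := by simp [Fin.ext_iff]
  rw [hk, LCn, Matrix.of_apply, if_neg h₀]
  simp only [h₁, h₂]
  by_cases hk₀ : k = 0
  · subst hk₀; simp [hne]
  by_cases hk₁ : k = Fin.last (m + 1)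
  · subst hk₁; simp [hne.symm]
  · simp [hk₀, hk₁]

theorem qq_add_one_add_castSucc (m : ℕ) (a : Fin (m + 3)) (c : Fin (m + 2)) :
    qq P (m + 3) a (a + 1 + c.castSucc)
      = cpathDet P (m + 3) (a + 1) c + cpathDet P (m + 3) (a + 1 + (c : ℕ) + 1) (m + 1 - c) := by
  have hc : a + 1 + c.castSucc = a + ((c + 1 : ℕ) : Fin (m + 3)) := by
    rw [← Fin.coe_eq_castSucc]; push_cast; ring
  rw [hc, qq_add_natCast _ _ (by omega), show m + 3 - (c + 1) = m + 1 - c + 1 by omega, pN_succ,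
    pN_succ]
  congr 2
  push_cast; ring

theorem cminor_eq_or_eq_neg_det_submatrix (a b : Fin n) {f g : Fin (n - 1) → Fin n}
    (hf : Function.Injective f) (hg : Function.Injective g)
    (hrf : Set.range f = {a}ᶜ) (hrg : Set.range g = {b}ᶜ) :
    cminor P n a b = ((LCn P n).submatrix f g).det
      ∨ cminor P n a b = -((LCn P n).submatrix f g).det := by
  have hrange : ∀ c : Fin n,
      Set.range ((Finset.univ.erase c).orderEmbOfFin (k := n - 1) (by simp)) = {c}ᶜ := by
    intro c
    rw [Finset.range_orderEmbOfFin, Finset.coe_erase, Finset.coe_univ, Set.compl_eq_univ_sdiff]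
  exact (LCn P n).det_submatrix_eq_or_eq_neg_of_range_eq hf (RelEmbedding.injective _) hg
    (RelEmbedding.injective _) ((hrange a).trans hrf.symm) ((hrange b).trans hrg.symm)

theorem range_add_one_add_castSucc (m : ℕ) (a : Fin (m + 1)) :
    Set.range (fun k : Fin m => a + 1 + k.castSucc) = {a}ᶜ := by
  have hcs : Set.range (Fin.castSucc : Fin m → Fin (m + 1)) = {Fin.last m}ᶜ := by
    ext x
    exact Fin.exists_castSucc_eq
  rw [show (fun k : Fin m => a + 1 + k.castSucc) = Equiv.addLeft (a + 1) ∘ Fin.castSucc from rfl,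
    Set.range_comp, hcs, Equiv.image_compl, Set.image_singleton, Equiv.coe_addLeft]
  simp [add_assoc, add_comm 1 (Fin.last _)]

theorem LCn_submatrix_swap_add_one_add_castSucc (m : ℕ) (a : Fin (m + 3)) (c : Fin (m + 2)) :
    (LCn P (m + 3)).submatrix (fun k => a + 1 + k.castSucc)
        (Equiv.swap a (a + 1 + c.castSucc) ∘ fun k => a + 1 + k.castSucc)
      = (pathMatrix P (m + 3) (a + 1) (m + 2)).updateCol c
          (-(Pi.single 0 1 + Pi.single (Fin.last (m + 1)) 1)) := by
  refine Matrix.ext fun x y => ?_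
  by_cases hy : y = c
  · subst hy
    simp [LCn_add_castSucc_apply]
  · have hya : a + 1 + y.castSucc ∈ ({a}ᶜ : Set (Fin (m + 3))) :=
      range_add_one_add_castSucc (m + 2) a ▸ Set.mem_range_self y
    have hyc : a + 1 + y.castSucc ≠ a + 1 + c.castSucc := by simpa using hy
    rw [Matrix.updateCol_ne hy, ← LCn_submatrix_add_castSucc, Matrix.submatrix_apply,
      Matrix.submatrix_apply, Function.comp_apply, Equiv.swap_apply_of_ne_of_ne hya hyc]

theorem cminor_eq_qq_or_eq_neg_qq (hn : 3 ≤ n) (a b : Fin n) :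
    cminor P n a b = qq P n a b ∨ cminor P n a b = -qq P n a b := by
  obtain ⟨m, rfl⟩ : ∃ m, n = m + 3 := ⟨n - 3, by omega⟩
  -- rows `v_{a+1}, …, v_{a-1}` in cyclic order; columns likewise, with `v_a` in place of `v_b`
  set f : Fin (m + 2) → Fin (m + 3) := fun k => a + 1 + k.castSucc
  have hf : Function.Injective f := fun x y h => Fin.castSucc_injective _ (add_left_cancel h)
  have hrange : Set.range f = {a}ᶜ := range_add_one_add_castSucc (m + 2) a
  have hrange_swap : Set.range (Equiv.swap a b ∘ f) = {b}ᶜ := by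
    rw [Set.range_comp, hrange, Equiv.image_compl, Set.image_singleton, Equiv.swap_apply_left]
  have hminor := cminor_eq_or_eq_neg_det_submatrix (P := P) a b hf
    ((Equiv.injective _).comp hf) hrange hrange_swap
  suffices hdet : ((LCn P (m + 3)).submatrix f (Equiv.swap a b ∘ f)).det = qq P (m + 3) a b
      ∨ ((LCn P (m + 3)).submatrix f (Equiv.swap a b ∘ f)).det = -qq P (m + 3) a b by
    rcases hminor with h | h <;> rcases hdet with h' | h' <;> simp [h, h']
  by_cases hab : b = a
  · subst hab
    left
    rw [Equiv.swap_self, Equiv.coe_refl, Function.id_comp, LCn_submatrix_add_castSucc,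
      ← cpathDet_eq_det]
    simp [qq, pN_zero, pN_succ]
  obtain ⟨c, rfl⟩ : b ∈ Set.range f := by rw [hrange]; exact hab
  right
  rw [LCn_submatrix_swap_add_one_add_castSucc,
    ← neg_one_smul (MvPolynomial (Fin (m + 3)) P) (_ + _), Matrix.det_updateCol_smul,
    det_updateCol_pathMatrix_single_add_single, qq_add_one_add_castSucc]
  ring

end CycleMinor

/-- For the cycle `C_n` (`n ≥ 3`): every `(n-1)`-minor `q_{i,j}` of `L(C_n,X)` satisfies
`±q_{i,j} = p_{i+1,j-i} + p_{j+1,n-j+i}`, and the recurrence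
`q_{i,i+j+s} = p_{i+j,s+1}·q_{i,i+j} − p_{i+j+1,s}·q_{i,i+j-1}` holds for
`2 ≤ j ≤ n−1` and `−j ≤ s ≤ n−j`. -/
theorem cycle_minor_identities (P : Type) [CommRing P] (n : ℕ) [NeZero n] (hn : 3 ≤ n) :
    (∀ i j : ℕ, 1 ≤ i → i ≤ j → j ≤ n →
      cminor P n (i : Fin n) (j : Fin n) = qq P n (i : Fin n) (j : Fin n) ∨
      cminor P n (i : Fin n) (j : Fin n) = - qq P n (i : Fin n) (j : Fin n)) ∧
    (∀ (i : Fin n) (j : ℕ) (s : ℤ), 2 ≤ j → j ≤ n - 1 →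
      -(j : ℤ) ≤ s → s ≤ (n : ℤ) - (j : ℤ) →
      qq P n i (i + (j : Fin n) + (s : Fin n))
        = pZ P n (i + (j : Fin n)) (s + 1) * qq P n i (i + (j : Fin n))
          - pZ P n (i + (j : Fin n) + 1) s * qq P n i (i + (j : Fin n) - 1)) :=
  ⟨fun _ _ _ _ _ => cminor_eq_qq_or_eq_neg_qq hn _ _,
    fun i j s _ hjn hs₁ hs₂ => qq_three_term_recurrence i j (by omega) (by omega) s hs₁ hs₂⟩
end
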